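/- arXiv:2004.01436 — 9 statements merged into one kernel-verified Lean document; each statement's English description precedes it below -/
import Mathlib

section
/- For any group G, the map g ↦ g - 1 + Δ²(G) induces a group isomorphism from G/γ₂(G) onto the additive quotient Δ(G)/Δ²(G), where Δ(G) is the augmentation ideal of the integral group ring ℤG and γ₂(G) is the commutator subgroup. -/
open MonoidAlgebra

/-- The augmentation map `ℤG → ℤ`. -/
noncomputable def aug (G : Type*) [Group G] : MonoidAlgebra ℤ G →ₐ[ℤ] ℤ :=
  (MonoidAlgebra.lift ℤ ℤ G) 1

/-- The augmentation ideal `Δ(G)` of `ℤG`. -/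
noncomputable def Δ (G : Type*) [Group G] : Ideal (MonoidAlgebra ℤ G) :=
  RingHom.ker (aug G).toRingHom

lemma aug_of (G : Type*) [Group G] (g : G) : aug G (MonoidAlgebra.of ℤ G g) = 1 := by
  simp [aug]

lemma aug_single (G : Type*) [Group G] (g : G) :
    aug G (MonoidAlgebra.single g (1 : ℤ)) = 1 := by
  simp [aug]

lemma of_sub_one_mem (G : Type*) [Group G] (g : G) :
    MonoidAlgebra.of ℤ G g - 1 ∈ Δ G := by
  simp [Δ, RingHom.mem_ker, aug_single]

/-- The group `V(ℤG)` of normalized units. -/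
noncomputable def V (G : Type*) [Group G] : Subgroup (MonoidAlgebra ℤ G)ˣ :=
  MonoidHom.ker (Units.map (aug G).toRingHom.toMonoidHom)

/-- The subgroup `V_n(ℤG) = V(ℤG) ∩ (1 + Δⁿ(G))`. -/
noncomputable def Vn (G : Type*) [Group G] (n : ℕ) : Subgroup (MonoidAlgebra ℤ G)ˣ where
  carrier := {u | u ∈ V G ∧ (u : MonoidAlgebra ℤ G) - 1 ∈ Δ G ^ n}
  one_mem' := ⟨(V G).one_mem, by simp⟩
  mul_mem' := by
    rintro u v ⟨hu, hu'⟩ ⟨hv, hv'⟩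
    refine ⟨(V G).mul_mem hu hv, ?_⟩
    have h : ((u * v : (MonoidAlgebra ℤ G)ˣ) : MonoidAlgebra ℤ G) - 1 =
        ((u : MonoidAlgebra ℤ G) - 1) * ((v : MonoidAlgebra ℤ G) - 1) +
        ((u : MonoidAlgebra ℤ G) - 1) + ((v : MonoidAlgebra ℤ G) - 1) := by
      rw [Units.val_mul]; noncomm_ring
    rw [h]
    exact add_mem (add_mem (Ideal.mul_mem_left _ _ hv') hu') hv'
  inv_mem' := by
    rintro u ⟨hu, hu'⟩
    refine ⟨(V G).inv_mem hu, ?_⟩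
    have h1 : ((u⁻¹ : (MonoidAlgebra ℤ G)ˣ) : MonoidAlgebra ℤ G) * (u : MonoidAlgebra ℤ G) = 1 :=
      u.inv_mul
    have h : ((u⁻¹ : (MonoidAlgebra ℤ G)ˣ) : MonoidAlgebra ℤ G) - 1 =
        -(((u⁻¹ : (MonoidAlgebra ℤ G)ˣ) : MonoidAlgebra ℤ G) * ((u : MonoidAlgebra ℤ G) - 1)) := by
      rw [mul_sub, h1, mul_one]; noncomm_ring
    rw [h]
    exact neg_mem (Ideal.mul_mem_left _ _ hu')

/-- The `Δ`-adic residue `V_ω(ℤG) = ⋂_{n ≥ 1} V_n(ℤG)`. -/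
noncomputable def Vω (G : Type*) [Group G] : Subgroup (MonoidAlgebra ℤ G)ˣ :=
  ⨅ n : ℕ, Vn G (n + 1)


section Aux
variable (G : Type*) [Group G]

local instance : CommGroup (G ⧸ commutator G) := Abelianization.commGroup G

noncomputable def φ0 : MonoidAlgebra ℤ G →+ Additive (G ⧸ commutator G) :=
  (Finsupp.liftAddHom fun g =>
    zmultiplesHom _ (Additive.ofMul (QuotientGroup.mk g : G ⧸ commutator G))).comp
    (MonoidAlgebra.coeffAddEquiv (R := ℤ) (M := G)).toAddMonoidHom

lemma φ0_single (g : G) (n : ℤ) :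
    φ0 G (MonoidAlgebra.single g n)
      = n • Additive.ofMul (QuotientGroup.mk g : G ⧸ commutator G) := by
  show (Finsupp.liftAddHom fun g =>
    zmultiplesHom _ (Additive.ofMul (QuotientGroup.mk g : G ⧸ commutator G))) (Finsupp.single g n) = _
  rw [Finsupp.liftAddHom_apply_single, zmultiplesHom_apply]

lemma φ0_of (g : G) :
    φ0 G (of ℤ G g) = Additive.ofMul (QuotientGroup.mk g : G ⧸ commutator G) := by
  simpa using φ0_single G g 1

lemma φ0_one : φ0 G (1 : MonoidAlgebra ℤ G) = 0 := by
  have h : (1 : MonoidAlgebra ℤ G) = MonoidAlgebra.single 1 1 := MonoidAlgebra.one_def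
  rw [h, φ0_single]
  simp

lemma φ0_of_sub_one (g : G) :
    φ0 G (of ℤ G g - 1) = Additive.ofMul (QuotientGroup.mk g : G ⧸ commutator G) := by
  rw [map_sub, φ0_of, φ0_one, sub_zero]

lemma delta_le_span :
    ∀ x ∈ Δ G, x ∈ Submodule.span ℤ (Set.range fun g : G => of ℤ G g - 1) := by
  intro x hx
  have hx0 : (Finsupp.sum x.coeff fun _ n => n) = 0 := by
    have h : aug G x = 0 := hx
    simpa [aug, MonoidAlgebra.lift_apply] using h
  have h1 : ∑ g ∈ x.coeff.support, x.coeff g • (of ℤ G g : MonoidAlgebra ℤ G) = x := by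
    conv_rhs => rw [← MonoidAlgebra.ofCoeff_coeff x, ← Finsupp.sum_single x.coeff]
    rw [Finsupp.sum, MonoidAlgebra.ofCoeff_sum]
    refine Finset.sum_congr rfl fun g hg => ?_
    rw [MonoidAlgebra.of_apply, MonoidAlgebra.ofCoeff_single, MonoidAlgebra.smul_single,
      smul_eq_mul, mul_one]
  have key : x = ∑ g ∈ x.coeff.support, x.coeff g • (of ℤ G g - 1) := by
    rw [Finsupp.sum] at hx0
    simp only [smul_sub, Finset.sum_sub_distrib, h1, ← Finset.sum_smul, hx0, zero_smul,
      sub_zero]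
  rw [key]
  exact Submodule.sum_mem _ fun g _ =>
    Submodule.smul_mem _ _ (Submodule.subset_span ⟨g, rfl⟩)

lemma φ0_gen_gen (g h : G) : φ0 G ((of ℤ G g - 1) * (of ℤ G h - 1)) = 0 := by
  have expand : (of ℤ G g - 1) * (of ℤ G h - 1)
      = of ℤ G (g * h) - of ℤ G g - of ℤ G h + 1 := by
    rw [map_mul]; noncomm_ring
  rw [expand, map_add, map_sub, map_sub, φ0_of, φ0_of, φ0_of, φ0_one]
  have : (QuotientGroup.mk (g * h) : G ⧸ commutator G)
      = QuotientGroup.mk g * QuotientGroup.mk h := rfl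
  rw [this]
  simp only [ofMul_mul]
  abel

lemma φ0_mul_zero {a b : MonoidAlgebra ℤ G} (ha : a ∈ Δ G) (hb : b ∈ Δ G) :
    φ0 G (a * b) = 0 := by
  have hb' := delta_le_span G b hb
  have ha' := delta_le_span G a ha
  clear ha hb
  induction ha' using Submodule.span_induction with
  | mem x hx =>
    obtain ⟨g, rfl⟩ := hx
    induction hb' using Submodule.span_induction with
    | mem y hy => obtain ⟨h, rfl⟩ := hy; exact φ0_gen_gen G g h
    | zero => simp
    | add y z _ _ hy hz => rw [mul_add, map_add, hy, hz, add_zero]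
    | smul n y _ hy => rw [mul_smul_comm, map_zsmul, hy, smul_zero]
  | zero => simp
  | add x y _ _ hx hy => rw [add_mul, map_add, hx, hy, add_zero]
  | smul n x _ hx => rw [smul_mul_assoc, map_zsmul, hx, smul_zero]

lemma φ0_sq_zero {x : MonoidAlgebra ℤ G} (hx : x ∈ Δ G ^ 2) : φ0 G x = 0 := by
  have hx' : x ∈ Δ G * Δ G := by rwa [Submodule.pow_succ, Submodule.pow_one] at hx
  refine Submodule.mul_induction_on hx' (fun a ha b hb => φ0_mul_zero G ha hb)
    (fun x y hx hy => by rw [map_add, hx, hy, add_zero])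

/-- The forward map `G →* Multiplicative (Δ/Δ²)`. -/
noncomputable def θ : G →* Multiplicative
    (↥(Δ G).toAddSubgroup ⧸
      ((Δ G ^ 2).toAddSubgroup.addSubgroupOf (Δ G).toAddSubgroup)) :=
  MonoidHom.mk' (fun g => Multiplicative.ofAdd
      (QuotientAddGroup.mk ⟨MonoidAlgebra.of ℤ G g - 1, of_sub_one_mem G g⟩)) (by
    intro g h
    show Multiplicative.ofAdd (QuotientAddGroup.mk
        (⟨MonoidAlgebra.of ℤ G (g * h) - 1, of_sub_one_mem G (g * h)⟩ :
          (Δ G).toAddSubgroup)) =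
      Multiplicative.ofAdd (QuotientAddGroup.mk
        (⟨MonoidAlgebra.of ℤ G g - 1, of_sub_one_mem G g⟩ : (Δ G).toAddSubgroup)) *
      Multiplicative.ofAdd (QuotientAddGroup.mk
        (⟨MonoidAlgebra.of ℤ G h - 1, of_sub_one_mem G h⟩ : (Δ G).toAddSubgroup))
    rw [← ofAdd_add, ← QuotientAddGroup.mk_add]
    apply congrArg
    rw [QuotientAddGroup.eq, AddSubgroup.mem_addSubgroupOf]
    have hm : -(MonoidAlgebra.of ℤ G (g * h) - 1) +
        ((MonoidAlgebra.of ℤ G g - 1) + (MonoidAlgebra.of ℤ G h - 1)) =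
        -((MonoidAlgebra.of ℤ G g - 1) * (MonoidAlgebra.of ℤ G h - 1)) := by
      rw [map_mul]; noncomm_ring
    show -(MonoidAlgebra.of ℤ G (g * h) - 1) +
        ((MonoidAlgebra.of ℤ G g - 1) + (MonoidAlgebra.of ℤ G h - 1)) ∈ Δ G ^ 2
    rw [hm, Submodule.pow_succ, Submodule.pow_one]
    exact neg_mem (Submodule.mul_mem_mul (of_sub_one_mem G g) (of_sub_one_mem G h)))

lemma θ_apply (g : G) : θ G g = Multiplicative.ofAdd
    (QuotientAddGroup.mk ⟨MonoidAlgebra.of ℤ G g - 1, of_sub_one_mem G g⟩) := rfl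

lemma comm_le_ker : commutator G ≤ (θ G).ker :=
  Abelianization.commutator_subset_ker (θ G)

/-- The induced map on `G ⧸ commutator G`. -/
noncomputable def θ' : (G ⧸ commutator G) →* Multiplicative
    (↥(Δ G).toAddSubgroup ⧸
      ((Δ G ^ 2).toAddSubgroup.addSubgroupOf (Δ G).toAddSubgroup)) :=
  QuotientGroup.lift (commutator G) (θ G) (comm_le_ker G)

/-- The inverse additive map. -/
noncomputable def ψ0 : (↥(Δ G).toAddSubgroup ⧸
      ((Δ G ^ 2).toAddSubgroup.addSubgroupOf (Δ G).toAddSubgroup)) →+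
    Additive (G ⧸ commutator G) :=
  QuotientAddGroup.lift _ ((φ0 G).comp (Δ G).toAddSubgroup.subtype) (by
    intro x hx
    rw [AddSubgroup.mem_addSubgroupOf] at hx
    show φ0 G x.1 = 0
    exact φ0_sq_zero G hx)

noncomputable def ψm : Multiplicative
    (↥(Δ G).toAddSubgroup ⧸
      ((Δ G ^ 2).toAddSubgroup.addSubgroupOf (Δ G).toAddSubgroup)) →*
    (G ⧸ commutator G) :=
  AddMonoidHom.toMultiplicativeLeft (ψ0 G)

lemma ψm_ofAdd_mk (x : MonoidAlgebra ℤ G) (hx : x ∈ Δ G) :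
    ψm G (Multiplicative.ofAdd (QuotientAddGroup.mk
      (⟨x, hx⟩ : (Δ G).toAddSubgroup))) = Additive.toMul (φ0 G x) := rfl

lemma θ'_mk (g : G) : θ' G (QuotientGroup.mk g) = Multiplicative.ofAdd
    (QuotientAddGroup.mk (⟨MonoidAlgebra.of ℤ G g - 1, of_sub_one_mem G g⟩ :
      (Δ G).toAddSubgroup)) := rfl

lemma iso_left : (ψm G).comp (θ' G) = MonoidHom.id _ := by
  refine MonoidHom.ext fun q => ?_
  induction q using QuotientGroup.induction_on with
  | H g =>
    show ψm G (θ' G (QuotientGroup.mk g)) = QuotientGroup.mk g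
    rw [θ'_mk, ψm_ofAdd_mk, φ0_of_sub_one]
    rfl

lemma key2 (x : MonoidAlgebra ℤ G) (hx : x ∈ Δ G) :
    θ' G (ψm G (Multiplicative.ofAdd (QuotientAddGroup.mk
        (⟨x, hx⟩ : (Δ G).toAddSubgroup)))) =
    Multiplicative.ofAdd (QuotientAddGroup.mk (⟨x, hx⟩ : (Δ G).toAddSubgroup)) := by
  have hs := delta_le_span G x hx
  have main : ∀ (y : MonoidAlgebra ℤ G),
      y ∈ Submodule.span ℤ (Set.range fun g : G => of ℤ G g - 1) →
      y ∈ Δ G ∧ ∀ h' : y ∈ Δ G,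
        θ' G (ψm G (Multiplicative.ofAdd (QuotientAddGroup.mk
            (⟨y, h'⟩ : (Δ G).toAddSubgroup)))) =
        Multiplicative.ofAdd (QuotientAddGroup.mk (⟨y, h'⟩ : (Δ G).toAddSubgroup)) := by
    intro y hy
    induction hy using Submodule.span_induction with
    | mem z hz =>
      obtain ⟨g, rfl⟩ := hz
      refine ⟨of_sub_one_mem G g, fun h' => ?_⟩
      rw [ψm_ofAdd_mk, φ0_of_sub_one]
      rfl
    | zero =>
      refine ⟨zero_mem _, fun h' => ?_⟩
      have h0 : (⟨(0 : MonoidAlgebra ℤ G), h'⟩ : (Δ G).toAddSubgroup) = 0 := rfl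
      rw [h0]
      simp
    | add a b _ _ iha ihb =>
      obtain ⟨haΔ, ihaf⟩ := iha
      obtain ⟨hbΔ, ihbf⟩ := ihb
      refine ⟨add_mem haΔ hbΔ, fun h' => ?_⟩
      have hsplit : (⟨a + b, h'⟩ : (Δ G).toAddSubgroup)
          = ⟨a, haΔ⟩ + ⟨b, hbΔ⟩ := rfl
      rw [hsplit, QuotientAddGroup.mk_add, ofAdd_add, map_mul, map_mul, ihaf, ihbf]
    | smul n a _ iha =>
      obtain ⟨haΔ, ihaf⟩ := iha
      refine ⟨zsmul_mem haΔ n, fun h' => ?_⟩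
      have hsplit : (⟨n • a, h'⟩ : (Δ G).toAddSubgroup)
          = n • (⟨a, haΔ⟩ : (Δ G).toAddSubgroup) := rfl
      rw [hsplit]
      have hmk : (QuotientAddGroup.mk (n • (⟨a, haΔ⟩ : (Δ G).toAddSubgroup)) :
          ↥(Δ G).toAddSubgroup ⧸
            ((Δ G ^ 2).toAddSubgroup.addSubgroupOf (Δ G).toAddSubgroup))
          = n • QuotientAddGroup.mk ⟨a, haΔ⟩ := rfl
      rw [hmk, ofAdd_zsmul, map_zpow, map_zpow, ihaf]
  exact (main x hs).2 hx

lemma iso_right : (θ' G).comp (ψm G) = MonoidHom.id _ := by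
  refine MonoidHom.ext fun q => ?_
  show θ' G (ψm G (Multiplicative.ofAdd (Multiplicative.toAdd q))) =
    Multiplicative.ofAdd (Multiplicative.toAdd q)
  generalize Multiplicative.toAdd q = a
  induction a using QuotientAddGroup.induction_on with
  | H z => exact key2 G z.1 z.2

end Aux

theorem stmt0 (G : Type*) [Group G] :
    ∃ e : (G ⧸ commutator G) ≃*
        Multiplicative
          (↥(Δ G).toAddSubgroup ⧸
            ((Δ G ^ 2).toAddSubgroup.addSubgroupOf (Δ G).toAddSubgroup)),
      ∀ g : G,
        e (QuotientGroup.mk g) =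
          Multiplicative.ofAdd
            (QuotientAddGroup.mk
              (⟨MonoidAlgebra.of ℤ G g - 1, of_sub_one_mem G g⟩ :
                ↥(Δ G).toAddSubgroup)) :=
  ⟨MonoidHom.toMulEquiv (θ' G) (ψm G) (iso_left G) (iso_right G), fun g => rfl⟩
end

section
/- For every group G and every n ≥ 1, the subgroup V_n(ℤG) = V(ℤG) ∩ (1 + Δⁿ(G)) is a normal subgroup of the normalized unit group V(ℤG), and the family {V_n(ℤG)}_{n≥1} is a central series, i.e., the commutator [V(ℤG), V_n(ℤG)] is contained in V_{n+1}(ℤG). -/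
open MonoidAlgebra
open scoped commutatorElement

lemma sub_one_mem_Δ_of_mem_V {G : Type*} [Group G] {u : (MonoidAlgebra ℤ G)ˣ}
    (hu : u ∈ V G) : (u : MonoidAlgebra ℤ G) - 1 ∈ Δ G := by
  have : aug G (u : MonoidAlgebra ℤ G) = 1 := by
    have := congrArg Units.val hu
    simpa using this
  simp [Δ, RingHom.mem_ker, this]

lemma Δ_mul_right {G : Type*} [Group G] {x : MonoidAlgebra ℤ G} (hx : x ∈ Δ G)
    (r : MonoidAlgebra ℤ G) : x * r ∈ Δ G := by
  have hx' : aug G x = 0 := hx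
  show aug G (x * r) = 0
  rw [map_mul, hx', zero_mul]

lemma Δ_pow_mul_right {G : Type*} [Group G] (n : ℕ) {x : MonoidAlgebra ℤ G}
    (hx : x ∈ Δ G ^ n) (r : MonoidAlgebra ℤ G) : x * r ∈ Δ G ^ n := by
  cases n with
  | zero =>
    rw [Submodule.pow_zero, Ideal.one_eq_top]; trivial
  | succ n =>
    rw [Submodule.pow_succ] at hx ⊢
    refine Submodule.mul_induction_on hx (fun a ha b hb => ?_) (fun a b ha hb => ?_)
    · rw [mul_assoc]
      exact Ideal.mul_mem_mul ha (Δ_mul_right hb r)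
    · rw [add_mul]; exact add_mem ha hb

lemma Δ_mul_pow_mem {G : Type*} [Group G] {x : MonoidAlgebra ℤ G} (hx : x ∈ Δ G) (n : ℕ)
    {y : MonoidAlgebra ℤ G} (hy : y ∈ Δ G ^ n) : x * y ∈ Δ G ^ (n + 1) := by
  induction n generalizing y with
  | zero =>
    rw [Submodule.pow_succ, Submodule.pow_zero, Submodule.one_mul]
    exact Δ_mul_right hx y
  | succ n ih =>
    rw [Submodule.pow_succ] at hy
    rw [Submodule.pow_succ]
    exact Submodule.mul_induction_on
      (C := fun z => x * z ∈ Δ G ^ (n + 1) * Δ G) hy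
      (fun a ha b hb => by
        show x * (a * b) ∈ Δ G ^ (n + 1) * Δ G
        rw [← mul_assoc]; exact Submodule.mul_mem_mul (ih ha) hb)
      (fun a b ha hb => by
        show x * (a + b) ∈ Δ G ^ (n + 1) * Δ G
        rw [mul_add]; exact add_mem ha hb)

theorem stmt1 (G : Type*) [Group G] (n : ℕ) (hn : 1 ≤ n) :
    ((Vn G n).subgroupOf (V G)).Normal ∧
      ∀ u v : (MonoidAlgebra ℤ G)ˣ, u ∈ V G → v ∈ Vn G n → ⁅u, v⁆ ∈ Vn G (n + 1) := by
  have key : ∀ u v : (MonoidAlgebra ℤ G)ˣ, u ∈ V G → v ∈ Vn G n → ⁅u, v⁆ ∈ Vn G (n + 1) := by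
    intro u v hu hv
    obtain ⟨hvV, hvΔ⟩ := hv
    have huΔ : (u : MonoidAlgebra ℤ G) - 1 ∈ Δ G := sub_one_mem_Δ_of_mem_V hu
    refine ⟨(V G).mul_mem ((V G).mul_mem ((V G).mul_mem hu hvV) ((V G).inv_mem hu))
      ((V G).inv_mem hvV), ?_⟩
    have hcomm : ((⁅u, v⁆ : (MonoidAlgebra ℤ G)ˣ) : MonoidAlgebra ℤ G) - 1 =
        (((u : MonoidAlgebra ℤ G) - 1) * ((v : MonoidAlgebra ℤ G) - 1) -
         ((v : MonoidAlgebra ℤ G) - 1) * ((u : MonoidAlgebra ℤ G) - 1)) *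
          ((u⁻¹ : (MonoidAlgebra ℤ G)ˣ) : MonoidAlgebra ℤ G) *
          ((v⁻¹ : (MonoidAlgebra ℤ G)ˣ) : MonoidAlgebra ℤ G) := by
      have h1 : (u : MonoidAlgebra ℤ G) * ((u⁻¹ : (MonoidAlgebra ℤ G)ˣ) : MonoidAlgebra ℤ G)
          = 1 := u.mul_inv
      have h2 : (v : MonoidAlgebra ℤ G) * ((v⁻¹ : (MonoidAlgebra ℤ G)ˣ) : MonoidAlgebra ℤ G)
          = 1 := v.mul_inv
      have expand : ((u : MonoidAlgebra ℤ G) - 1) * ((v : MonoidAlgebra ℤ G) - 1) -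
          ((v : MonoidAlgebra ℤ G) - 1) * ((u : MonoidAlgebra ℤ G) - 1) =
          (u : MonoidAlgebra ℤ G) * v - (v : MonoidAlgebra ℤ G) * u := by noncomm_ring
      rw [expand, commutatorElement_def]
      push_cast
      rw [sub_mul, sub_mul, mul_assoc ((v : MonoidAlgebra ℤ G)) _ _, h1, mul_one, h2]
    rw [hcomm]
    refine Δ_pow_mul_right _ (Δ_pow_mul_right _ ?_ _) _
    refine sub_mem ?_ ?_
    · exact Δ_mul_pow_mem huΔ n hvΔ
    · rw [Submodule.pow_succ]
      exact Submodule.mul_mem_mul hvΔ huΔ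
  refine ⟨⟨?_⟩, key⟩
  intro x hx g
  simp only [Subgroup.mem_subgroupOf] at hx ⊢
  obtain ⟨hxV, hxΔ⟩ := hx
  refine ⟨(V G).mul_mem ((V G).mul_mem g.2 hxV) ((V G).inv_mem g.2), ?_⟩
  have h : (((g * x * g⁻¹ : V G) : (MonoidAlgebra ℤ G)ˣ) : MonoidAlgebra ℤ G) - 1 =
      ((g : (MonoidAlgebra ℤ G)ˣ) : MonoidAlgebra ℤ G) *
      (((x : (MonoidAlgebra ℤ G)ˣ) : MonoidAlgebra ℤ G) - 1) *
      (((g : (MonoidAlgebra ℤ G)ˣ)⁻¹ : (MonoidAlgebra ℤ G)ˣ) : MonoidAlgebra ℤ G) := by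
    have h1 : ((g : (MonoidAlgebra ℤ G)ˣ) : MonoidAlgebra ℤ G) *
        (((g : (MonoidAlgebra ℤ G)ˣ)⁻¹ : (MonoidAlgebra ℤ G)ˣ) : MonoidAlgebra ℤ G) = 1 :=
      (g : (MonoidAlgebra ℤ G)ˣ).mul_inv
    push_cast
    rw [mul_sub, mul_one, sub_mul, h1, mul_assoc]
  rw [h]
  exact Δ_pow_mul_right _ (Ideal.mul_mem_left _ _ hxΔ) _
end

section
/- Let g, h be elements of a group G with g of finite order n. The bicyclic unit u_{g,h} = 1 + (g-1)h·ĝ equals 1 if and only if h normalizes the cyclic subgroup ⟨g⟩. -/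
open MonoidAlgebra

lemma conj_zpow' {G : Type*} [Group G] (g h : G) (m : ℤ) :
    (h⁻¹ * g * h) ^ m = h⁻¹ * g ^ m * h := by
  have := conj_zpow (i := m) (a := h⁻¹) (b := g)
  rwa [inv_inv] at this

lemma ghat_core (G : Type*) [Group G] (g : G) (n : ℕ) (hn : 0 < n) (hord : orderOf g = n) :
    MonoidAlgebra.of ℤ G g * ∑ i ∈ Finset.range n, MonoidAlgebra.of ℤ G (g ^ i) =
      ∑ i ∈ Finset.range n, MonoidAlgebra.of ℤ G (g ^ i) := by
  rw [Finset.mul_sum]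
  have h1 : ∀ i, MonoidAlgebra.of ℤ G g * MonoidAlgebra.of ℤ G (g ^ i) =
      MonoidAlgebra.of ℤ G (g ^ (i + 1)) := by
    intro i; rw [← map_mul]; congr 1; rw [pow_succ']
  simp_rw [h1]
  have e1 := Finset.sum_range_succ' (fun i => MonoidAlgebra.of ℤ G (g ^ i)) n
  have e2 := Finset.sum_range_succ (fun i => MonoidAlgebra.of ℤ G (g ^ i)) n
  have h3 : g ^ n = g ^ 0 := by rw [pow_zero, ← hord, pow_orderOf_eq_one]
  simp only [h3] at e2
  have h2 := e1.symm.trans e2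
  exact add_right_cancel h2

lemma pow_mul_ghat (G : Type*) [Group G] (g : G) (n : ℕ) (hn : 0 < n) (hord : orderOf g = n)
    (k : ℕ) :
    MonoidAlgebra.of ℤ G (g ^ k) * ∑ i ∈ Finset.range n, MonoidAlgebra.of ℤ G (g ^ i) =
      ∑ i ∈ Finset.range n, MonoidAlgebra.of ℤ G (g ^ i) := by
  induction k with
  | zero => rw [pow_zero, map_one, one_mul]
  | succ k ih =>
    rw [pow_succ', map_mul, mul_assoc, ih, ghat_core G g n hn hord]

lemma mul_ghat_iff (G : Type*) [Group G] (g : G) (n : ℕ) (hn : 0 < n) (hord : orderOf g = n)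
    (a : G) :
    MonoidAlgebra.of ℤ G a * ∑ i ∈ Finset.range n, MonoidAlgebra.of ℤ G (g ^ i) =
      ∑ i ∈ Finset.range n, MonoidAlgebra.of ℤ G (g ^ i) ↔ a ∈ Subgroup.zpowers g := by
  classical
  constructor
  · intro heq
    by_contra ha
    simp only [Finset.mul_sum, MonoidAlgebra.of_apply, MonoidAlgebra.single_mul_single,
      one_mul] at heq
    have heq2 : (∑ x ∈ Finset.range n, Finsupp.single (a * g ^ x) (1 : ℤ)) =
        ∑ x ∈ Finset.range n, Finsupp.single (g ^ x) (1 : ℤ) := by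
      simpa only [← MonoidAlgebra.ofCoeff_single, ← MonoidAlgebra.ofCoeff_sum,
        MonoidAlgebra.ofCoeff_inj] using heq
    have happ := DFunLike.congr_fun heq2 a
    simp only [Finsupp.finset_sum_apply, Finsupp.single_apply] at happ
    have hLHS : ∑ i ∈ Finset.range n, (if a * g ^ i = a then (1 : ℤ) else 0) = 1 := by
      rw [Finset.sum_eq_single 0]
      · simp
      · intro i hi hi0
        rw [if_neg]
        intro hcon
        have hg1 : g ^ i = 1 := by
          have := mul_left_cancel (a := a) (b := g ^ i) (c := 1) (by simpa using hcon)
          exact this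
        have hd := orderOf_dvd_of_pow_eq_one hg1
        rw [hord] at hd
        exact hi0 (Nat.eq_zero_of_dvd_of_lt hd (Finset.mem_range.mp hi))
      · intro h0; exact absurd (Finset.mem_range.mpr hn) h0
    have hRHS : ∑ i ∈ Finset.range n, (if g ^ i = a then (1 : ℤ) else 0) = 0 := by
      apply Finset.sum_eq_zero
      intro i _
      rw [if_neg]
      intro hcon
      exact ha ⟨(i : ℤ), by simpa using hcon⟩
    rw [hLHS, hRHS] at happ
    exact one_ne_zero happ
  · intro ha
    have hfo : IsOfFinOrder g := by
      rw [← orderOf_pos_iff, hord]; exact hn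
    obtain ⟨k, rfl⟩ := hfo.mem_powers_iff_mem_zpowers.mpr ha
    exact pow_mul_ghat G g n hn hord k

lemma of_cancel (G : Type*) [Group G] (a : G) (x y : MonoidAlgebra ℤ G) :
    MonoidAlgebra.of ℤ G a * x = MonoidAlgebra.of ℤ G a * y ↔ x = y := by
  constructor
  · intro H
    have h2 := congrArg (fun z => MonoidAlgebra.of ℤ G a⁻¹ * z) H
    simp only [← mul_assoc, ← map_mul, inv_mul_cancel, map_one, one_mul] at h2
    exact h2
  · rintro rfl; rfl

lemma norm_iff (G : Type*) [Group G] (g h : G) (n : ℕ) (hn : 0 < n) (hord : orderOf g = n) :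
    h⁻¹ * g * h ∈ Subgroup.zpowers g ↔ h ∈ Subgroup.normalizer (Subgroup.zpowers g : Set G) := by
  constructor
  · intro ha
    have hscj : SemiconjBy h⁻¹ g (h⁻¹ * g * h) := by
      unfold SemiconjBy; group
    have hordeq : orderOf g = orderOf (h⁻¹ * g * h) := hscj.orderOf_eq
    have hfo : IsOfFinOrder g := by rw [← orderOf_pos_iff, hord]; exact hn
    have hfin : Finite (Subgroup.zpowers g) := hfo.finite_zpowers.to_subtype
    have hle : Subgroup.zpowers (h⁻¹ * g * h) ≤ Subgroup.zpowers g :=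
      Subgroup.zpowers_le.mpr ha
    have heq : Subgroup.zpowers (h⁻¹ * g * h) = Subgroup.zpowers g :=
      Subgroup.eq_of_le_of_card_ge hle (by rw [Nat.card_zpowers, Nat.card_zpowers, hordeq])
    rw [Subgroup.mem_normalizer_iff'']
    intro x
    constructor
    · rintro ⟨m, rfl⟩
      exact heq ▸ ⟨m, by simpa using conj_zpow' g h m⟩
    · intro hx
      rw [← heq] at hx
      obtain ⟨m, hm⟩ := hx
      refine ⟨m, ?_⟩
      have h5 : h⁻¹ * g ^ m * h = h⁻¹ * x * h := by rw [← hm]; exact (conj_zpow' g h m).symm ▸ rfl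
      exact mul_left_cancel (mul_right_cancel h5)
  · intro hnorm
    exact (Subgroup.mem_normalizer_iff''.mp hnorm g).mp (Subgroup.mem_zpowers g)

theorem stmt4 (G : Type*) [Group G] (g h : G) (n : ℕ) (hn : 0 < n) (hord : orderOf g = n) :
    1 + (MonoidAlgebra.of ℤ G g - 1) * MonoidAlgebra.of ℤ G h *
        ∑ i ∈ Finset.range n, MonoidAlgebra.of ℤ G (g ^ i) = 1 ↔
      h ∈ Subgroup.normalizer (Subgroup.zpowers g : Set G) := by
  have key : MonoidAlgebra.of ℤ G g * MonoidAlgebra.of ℤ G h =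
      MonoidAlgebra.of ℤ G h * MonoidAlgebra.of ℤ G (h⁻¹ * g * h) := by
    rw [← map_mul, ← map_mul]; congr 1; group
  rw [add_eq_left, sub_mul, one_mul, sub_mul, sub_eq_zero, key, mul_assoc,
    of_cancel, mul_ghat_iff G g n hn hord, norm_iff G g h n hn hord]
end

section
/- If g and h are elements of finite, coprime orders in a group G, then (g-1)(h-1) lies in Δ^ω(G) = ⋂_{n≥1} Δⁿ(G), the intersection of all powers of the augmentation ideal of ℤG. -/
open MonoidAlgebra

open Finset in
lemma helper {R : Type*} [Ring R] (x : R) (M : ℕ) (hpow : (x + 1) ^ (M + 1) = 1) :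
    (((M + 1 : ℕ)) : R) * x =
      x * (-∑ k ∈ Finset.range M, x ^ (k + 1) * (((M + 1).choose (k + 2) : ℕ) : R)) := by
  have hsum : ∑ k ∈ range (M + 1 + 1), x ^ k * (((M + 1).choose k : ℕ) : R) = 1 := by
    rw [← hpow, Commute.add_pow (Commute.one_right x)]
    simp
  rw [Finset.sum_range_succ', Finset.sum_range_succ'] at hsum
  simp only [zero_add, pow_zero, pow_one, Nat.choose_zero_right, Nat.choose_one_right,
    Nat.cast_one, mul_one, one_mul] at hsum
  have h0 : (∑ k ∈ range M, x ^ (k + 1 + 1) * (((M + 1).choose (k + 1 + 1) : ℕ) : R))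
      + x * ((M + 1 : ℕ) : R) = 0 := by
    rwa [add_eq_right] at hsum
  have hS : x * ((M + 1 : ℕ) : R) =
      -∑ k ∈ range M, x ^ (k + 1 + 1) * (((M + 1).choose (k + 1 + 1) : ℕ) : R) :=
    eq_neg_of_add_eq_zero_right h0
  rw [(Nat.cast_commute (M + 1 : ℕ) x).eq, hS, mul_neg, Finset.mul_sum]
  congr 1
  refine Finset.sum_congr rfl fun k _ => ?_
  rw [← mul_assoc, ← pow_succ']

lemma exists_c (G : Type*) [Group G] (g : G) (hg : IsOfFinOrder g) :
    ∃ c ∈ Δ G, ((orderOf g : ℕ) : MonoidAlgebra ℤ G) * (MonoidAlgebra.of ℤ G g - 1) =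
      (MonoidAlgebra.of ℤ G g - 1) * c := by
  obtain ⟨M, hM⟩ : ∃ M, orderOf g = M + 1 :=
    ⟨orderOf g - 1, (Nat.succ_pred_eq_of_pos hg.orderOf_pos).symm⟩
  set x := MonoidAlgebra.of ℤ G g - 1 with hxdef
  have hx : x ∈ Δ G := of_sub_one_mem G g
  have hpow : (x + 1) ^ (M + 1) = 1 := by
    have hx1 : x + 1 = MonoidAlgebra.of ℤ G g := by rw [hxdef]; abel
    rw [hx1, ← map_pow, ← hM, pow_orderOf_eq_one, map_one]
  refine ⟨-∑ k ∈ Finset.range M, x ^ (k + 1) * (((M + 1).choose (k + 2) : ℕ) : MonoidAlgebra ℤ G),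
    ?_, ?_⟩
  · refine neg_mem (sum_mem fun k _ => ?_)
    rw [(Nat.cast_commute ((M + 1).choose (k + 2)) (x ^ (k + 1))).symm.eq, pow_succ]
    exact Ideal.mul_mem_left _ _ (Ideal.mul_mem_left _ _ hx)
  · rw [hM]
    exact helper x M hpow

lemma pow_mul_mem (G : Type*) [Group G] (g : G) (hg : IsOfFinOrder g) (k : ℕ) :
    ((orderOf g : ℕ) : MonoidAlgebra ℤ G) ^ k * (MonoidAlgebra.of ℤ G g - 1) ∈ Δ G ^ (k + 1) := by
  obtain ⟨c, hc, hcx⟩ := exists_c G g hg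
  set x := MonoidAlgebra.of ℤ G g - 1
  have hx : x ∈ Δ G := of_sub_one_mem G g
  induction k with
  | zero => simpa [Submodule.pow_one] using hx
  | succ k ih =>
    have step : ((orderOf g : ℕ) : MonoidAlgebra ℤ G) ^ (k + 1) * x
        = (((orderOf g : ℕ) : MonoidAlgebra ℤ G) ^ k * x) * c := by
      rw [pow_succ, mul_assoc, hcx, ← mul_assoc]
    rw [step, Submodule.pow_succ]
    exact Submodule.mul_mem_mul ih hc

theorem stmt6 (G : Type*) [Group G] (g h : G) (hg : IsOfFinOrder g) (hh : IsOfFinOrder h)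
    (hco : Nat.Coprime (orderOf g) (orderOf h)) :
    ∀ n : ℕ, (MonoidAlgebra.of ℤ G g - 1) * (MonoidAlgebra.of ℤ G h - 1) ∈ Δ G ^ n := by
  intro N
  set x := MonoidAlgebra.of ℤ G g - 1 with hxdef
  set y := MonoidAlgebra.of ℤ G h - 1 with hydef
  set m := orderOf g with hmdef
  set n := orderOf h with hndef
  have hcop : IsCoprime ((m : ℤ) ^ N) ((n : ℤ) ^ N) := by
    refine IsCoprime.pow ?_
    rw [Nat.isCoprime_iff_coprime]
    exact hco
  obtain ⟨a, b, hab⟩ := hcop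
  have hle : Δ G ^ (N + 2) ≤ Δ G ^ N := Ideal.pow_le_pow_right (by omega)
  have h1 : ((m : MonoidAlgebra ℤ G) ^ N * x) * y ∈ Δ G ^ N := by
    have hmem := Submodule.mul_mem_mul (pow_mul_mem G g hg N) (of_sub_one_mem G h)
    rw [← Submodule.pow_succ] at hmem
    exact hle hmem
  have h2 : x * ((n : MonoidAlgebra ℤ G) ^ N * y) ∈ Δ G ^ N := by
    have hmem := Submodule.mul_mem_mul (of_sub_one_mem G g) (pow_mul_mem G h hh N)
    have hsub : Δ G * Δ G ^ (N + 1) ≤ Δ G ^ (N + 1) :=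
      Submodule.mul_le.mpr fun a _ b hb => Ideal.mul_mem_left _ a hb
    exact Ideal.pow_le_pow_right (by omega) (hsub hmem)
  have hcast : ((a : MonoidAlgebra ℤ G) * (m : MonoidAlgebra ℤ G) ^ N
      + (b : MonoidAlgebra ℤ G) * (n : MonoidAlgebra ℤ G) ^ N) = 1 := by
    have hc := congrArg (fun z : ℤ => ((z : ℤ) : MonoidAlgebra ℤ G)) hab
    push_cast at hc
    simpa using hc
  have hcomm : x * ((n : MonoidAlgebra ℤ G) ^ N * y)
      = (n : MonoidAlgebra ℤ G) ^ N * (x * y) := by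
    rw [← mul_assoc, ← ((Nat.cast_commute n x).pow_left N).eq, mul_assoc]
  have hxy : x * y = (a : MonoidAlgebra ℤ G) * (((m : MonoidAlgebra ℤ G) ^ N * x) * y)
      + (b : MonoidAlgebra ℤ G) * (x * ((n : MonoidAlgebra ℤ G) ^ N * y)) := by
    calc x * y = 1 * (x * y) := (one_mul _).symm
    _ = ((a : MonoidAlgebra ℤ G) * (m : MonoidAlgebra ℤ G) ^ N
        + (b : MonoidAlgebra ℤ G) * (n : MonoidAlgebra ℤ G) ^ N) * (x * y) := by rw [hcast]
    _ = (a : MonoidAlgebra ℤ G) * ((m : MonoidAlgebra ℤ G) ^ N * (x * y))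
        + (b : MonoidAlgebra ℤ G) * ((n : MonoidAlgebra ℤ G) ^ N * (x * y)) := by
        rw [add_mul, mul_assoc, mul_assoc]
    _ = _ := by rw [← hcomm, ← mul_assoc ((m : MonoidAlgebra ℤ G) ^ N) x y]
  rw [hxy]
  exact add_mem (Ideal.mul_mem_left _ _ h1) (Ideal.mul_mem_left _ _ h2)
end

section
/- If g and h are elements of finite coprime orders in a group G, then the bicyclic unit u_{g,h} = 1 + (g-1)h·ĝ lies in V_ω(ℤG) = ⋂_{n≥1} V_n(ℤG), the Δ-adic residue of the normalized unit group. -/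
open MonoidAlgebra

section BicyclicAux

lemma bicyclic_pow_succ' {R : Type*} [Ring R] (I : Ideal R) (n : ℕ) :
    I ^ (n + 2) = I * I ^ (n + 1) := by
  induction n with
  | zero =>
    show I ^ 1 * I = I * I ^ 1
    rw [Submodule.pow_one]
  | succ n ih =>
    calc I ^ (n + 3) = I ^ (n + 2) * I := Submodule.pow_succ I
      _ = (I * I ^ (n + 1)) * I := by rw [ih]
      _ = I * (I ^ (n + 1) * I) := mul_assoc _ _ _
      _ = I * I ^ (n + 2) := by rw [← Submodule.pow_succ I]

/-- Binomial trick: if `(a+1)^k = 1` with `k ≥ 1` then `k • a` is a combination of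
higher powers of `a`. -/
lemma bicyclic_aux_binom {R : Type*} [Ring R] (a : R) (k : ℕ) (hk : 1 ≤ k)
    (h1 : (a + 1) ^ k = 1) :
    k • a = -∑ i ∈ Finset.Ico 2 (k + 1), (k.choose i) • a ^ i := by
  have hbin : (1 : R) = ∑ i ∈ Finset.range (k + 1), (k.choose i) • a ^ i := by
    rw [← h1, (Commute.one_right a).add_pow]
    exact Finset.sum_congr rfl fun i _ => by
      rw [one_pow, mul_one, nsmul_eq_mul, (Nat.cast_commute _ _).eq]
  have hsplit : ∑ i ∈ Finset.range (k + 1), (k.choose i) • a ^ i =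
      1 + (k • a + ∑ i ∈ Finset.Ico 2 (k + 1), (k.choose i) • a ^ i) := by
    rw [Finset.range_eq_Ico, Finset.sum_eq_sum_Ico_succ_bot (by omega),
      Finset.sum_eq_sum_Ico_succ_bot (by omega)]
    simp [add_assoc]
  rw [hsplit] at hbin
  have h0 : k • a + ∑ i ∈ Finset.Ico 2 (k + 1), (k.choose i) • a ^ i = 0 :=
    (add_left_cancel (a := (1 : R)) (by rw [add_zero, ← hbin])).symm
  exact eq_neg_of_add_eq_zero_left h0

end BicyclicAux

set_option maxHeartbeats 1000000 in
theorem stmt7 (G : Type*) [Group G] (g h : G) (hg : IsOfFinOrder g) (hh : IsOfFinOrder h)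
    (hco : Nat.Coprime (orderOf g) (orderOf h)) (u : (MonoidAlgebra ℤ G)ˣ)
    (hu : (u : MonoidAlgebra ℤ G) =
      1 + (MonoidAlgebra.of ℤ G g - 1) * MonoidAlgebra.of ℤ G h *
        ∑ i ∈ Finset.range (orderOf g), MonoidAlgebra.of ℤ G (g ^ i)) :
    u ∈ Vω G := by
  classical
  set k := orderOf g with hk
  set m := orderOf h with hm
  have hk1 : 1 ≤ k := hg.orderOf_pos
  have hm1 : 1 ≤ m := hh.orderOf_pos
  set a : MonoidAlgebra ℤ G := MonoidAlgebra.of ℤ G g - 1 with ha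
  set b : MonoidAlgebra ℤ G := MonoidAlgebra.of ℤ G h - 1 with hb
  have hΔa : a ∈ Δ G := of_sub_one_mem G g
  have hΔb : b ∈ Δ G := of_sub_one_mem G h
  set Ghat : MonoidAlgebra ℤ G := ∑ i ∈ Finset.range k, MonoidAlgebra.of ℤ G (g ^ i) with hGhat
  -- (g - 1) * ĝ = 0
  have hag : a * Ghat = 0 := by
    have step : a * Ghat = ∑ i ∈ Finset.range k,
        (MonoidAlgebra.of ℤ G (g ^ (i + 1)) - MonoidAlgebra.of ℤ G (g ^ i)) := by
      rw [hGhat, Finset.mul_sum]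
      refine Finset.sum_congr rfl fun i _ => ?_
      rw [ha, sub_mul, one_mul, ← map_mul, ← pow_succ']
    rw [step, Finset.sum_range_sub (fun i => MonoidAlgebra.of ℤ G (g ^ i))]
    rw [hk, pow_orderOf_eq_one, pow_zero, sub_self]
  -- binomial facts
  have hka : k • a = -∑ i ∈ Finset.Ico 2 (k + 1), (k.choose i) • a ^ i := by
    refine bicyclic_aux_binom a k hk1 ?_
    rw [ha, sub_add_cancel, ← map_pow, pow_orderOf_eq_one, map_one]
  have hmb : m • b = -∑ i ∈ Finset.Ico 2 (m + 1), (m.choose i) • b ^ i := by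
    refine bicyclic_aux_binom b m hm1 ?_
    rw [hb, sub_add_cancel, ← map_pow, pow_orderOf_eq_one, map_one]
  -- the key Δ-adic fact: ab ∈ Δⁿ for every n
  have key : ∀ n : ℕ, a * b ∈ Δ G ^ n := by
    intro n
    induction n with
    | zero =>
      rw [Submodule.pow_zero (Δ G), Ideal.one_eq_top]
      trivial
    | succ n ih =>
      match n, ih with
      | 0, _ =>
        rw [Submodule.pow_one]
        exact Ideal.mul_mem_left _ _ hΔb
      | (n + 1), ih =>
        have t1 : k • (a * b) ∈ Δ G ^ (n + 2) := by
          have e1 : k • (a * b) = -∑ i ∈ Finset.Ico 2 (k + 1),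
              (k.choose i) • (a ^ i * b) := by
            rw [← smul_mul_assoc, hka, neg_mul, Finset.sum_mul]
            congr 1
            exact Finset.sum_congr rfl fun i _ => (smul_mul_assoc _ _ _)
          rw [e1]
          refine neg_mem (Submodule.sum_mem _ fun i hi => ?_)
          obtain ⟨j, rfl⟩ : ∃ j, i = j + 2 :=
            ⟨i - 2, by have := (Finset.mem_Ico.mp hi).1; omega⟩
          rw [nsmul_eq_mul]
          refine Ideal.mul_mem_left _ _ ?_
          have e2 : a ^ (j + 2) * b = a ^ (j + 1) * (a * b) := by
            rw [pow_succ, mul_assoc]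
          have e3 : a ^ (j + 1) ∈ Δ G := by
            rw [pow_succ]; exact Ideal.mul_mem_left _ _ hΔa
          rw [e2, bicyclic_pow_succ']
          exact Ideal.mul_mem_mul e3 ih
        have t2 : m • (a * b) ∈ Δ G ^ (n + 2) := by
          have e1 : m • (a * b) = -∑ i ∈ Finset.Ico 2 (m + 1),
              (m.choose i) • (a * b ^ i) := by
            rw [← mul_smul_comm, hmb, mul_neg, Finset.mul_sum]
            congr 1
            exact Finset.sum_congr rfl fun i _ => (mul_smul_comm _ _ _)
          rw [e1]
          refine neg_mem (Submodule.sum_mem _ fun i hi => ?_)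
          obtain ⟨j, rfl⟩ : ∃ j, i = j + 2 :=
            ⟨i - 2, by have := (Finset.mem_Ico.mp hi).1; omega⟩
          rw [nsmul_eq_mul]
          refine Ideal.mul_mem_left _ _ ?_
          have e2 : a * b ^ (j + 2) = (a * b) * b ^ (j + 1) := by
            rw [pow_succ', ← mul_assoc]
          have e3 : b ^ (j + 1) ∈ Δ G := by
            rw [pow_succ]; exact Ideal.mul_mem_left _ _ hΔb
          rw [e2, Submodule.pow_succ (Δ G)]
          exact Ideal.mul_mem_mul ih e3
        obtain ⟨x, y, hxy⟩ := Nat.isCoprime_iff_coprime.mpr hco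
        have hsum : a * b = x • (k • (a * b)) + y • (m • (a * b)) := by
          calc a * b = (x * (k : ℤ) + y * (m : ℤ)) • (a * b) := by rw [hxy, one_smul]
            _ = x • ((k : ℤ) • (a * b)) + y • ((m : ℤ) • (a * b)) := by
                rw [add_smul, mul_smul, mul_smul]
            _ = x • (k • (a * b)) + y • (m • (a * b)) := by
                rw [natCast_zsmul, natCast_zsmul]
        rw [hsum]
        refine add_mem ?_ ?_
        · rw [zsmul_eq_mul]; exact Ideal.mul_mem_left _ _ t1
        · rw [zsmul_eq_mul]; exact Ideal.mul_mem_left _ _ t2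
  -- Ghat - k is in Δ
  have hδ : Ghat - (k : MonoidAlgebra ℤ G) ∈ Δ G := by
    have e : Ghat - (k : MonoidAlgebra ℤ G) =
        ∑ i ∈ Finset.range k, (MonoidAlgebra.of ℤ G (g ^ i) - 1) := by
      rw [Finset.sum_sub_distrib, hGhat]
      congr 1
      simp [Finset.sum_const, Finset.card_range]
    rw [e]
    exact Submodule.sum_mem _ fun i _ => of_sub_one_mem G (g ^ i)
  -- u - 1 = a * b * Ghat
  have hu1 : (u : MonoidAlgebra ℤ G) - 1 = a * b * Ghat := by
    rw [hu, add_sub_cancel_left]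
    have hofh : (MonoidAlgebra.of ℤ G h : MonoidAlgebra ℤ G) = b + 1 := by
      rw [hb, sub_add_cancel]
    rw [hofh, mul_add, mul_one, add_mul, hag, add_zero]
  -- u is normalized
  have hV : u ∈ V G := by
    have haug : aug G (u : MonoidAlgebra ℤ G) = 1 := by
      rw [hu, ha]
      simp [map_sub, aug_of, aug_single]
    rw [V, MonoidHom.mem_ker]
    ext
    simp only [Units.coe_map, MonoidHom.coe_coe, Units.val_one]
    exact haug
  -- conclude
  rw [Vω, Subgroup.mem_iInf]
  intro n
  refine ⟨hV, ?_⟩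
  have split : (u : MonoidAlgebra ℤ G) - 1 =
      (a * b) * (Ghat - (k : MonoidAlgebra ℤ G)) + (k : MonoidAlgebra ℤ G) * (a * b) := by
    rw [hu1, (Nat.cast_commute k (a * b)).eq,
      mul_sub (a * b) Ghat ((k : MonoidAlgebra ℤ G)), sub_add_cancel]
  rw [split]
  refine add_mem ?_ (Ideal.mul_mem_left _ _ (key (n + 1)))
  rw [Submodule.pow_succ (Δ G)]
  exact Ideal.mul_mem_mul (key n) hδ
end

section
/- Let G and H be finite groups of coprime orders. If the integral group ring ℤG contains a non-zero nilpotent element, then V_ω(ℤ[G × H]) ≠ {1}, i.e., the Δ-adic residue of the normalized unit group of ℤ[G × H] is non-trivial. -/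
open MonoidAlgebra

-- my aux lemmas
lemma aug_eq_sum {G : Type*} [Group G] (x : MonoidAlgebra ℤ G) :
    aug G x = x.coeff.sum fun _ a => a := by
  rw [aug, MonoidAlgebra.lift_apply]
  simp

lemma mem_Δ_iff {G : Type*} [Group G] {x : MonoidAlgebra ℤ G} :
    x ∈ Δ G ↔ aug G x = 0 := Iff.rfl

lemma aug_apply_single (G : Type*) [Group G] (g : G) (a : ℤ) :
    aug G (MonoidAlgebra.single g a) = a := by
  rw [aug_eq_sum, MonoidAlgebra.coeff_single, Finsupp.sum_single_index]; rfl

lemma Δ_le_span (G : Type*) [Group G] :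
    Δ G ≤ Ideal.span (Set.range fun g : G => MonoidAlgebra.of ℤ G g - 1) := by
  intro x hx
  have haug : aug G x = ∑ g ∈ x.coeff.support, x.coeff g := by
    rw [aug_eq_sum, Finsupp.sum]
  have hx0 : aug G x = 0 := hx
  have hrep : x = ∑ g ∈ x.coeff.support, x.coeff g • (MonoidAlgebra.of ℤ G g - 1) := by
    have h1 : ∑ g ∈ x.coeff.support, x.coeff g • (MonoidAlgebra.of ℤ G g - 1)
        = (∑ g ∈ x.coeff.support, x.coeff g • MonoidAlgebra.of ℤ G g)
          - (∑ g ∈ x.coeff.support, x.coeff g) • (1 : MonoidAlgebra ℤ G) := by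
      rw [Finset.sum_smul, ← Finset.sum_sub_distrib]
      exact Finset.sum_congr rfl fun g _ => smul_sub _ _ _
    rw [h1, ← haug, hx0, zero_smul, sub_zero]
    conv_lhs => rw [← MonoidAlgebra.sum_coeff_single x]
    rw [Finsupp.sum]
    refine Finset.sum_congr rfl fun g _ => ?_
    rw [MonoidAlgebra.of_apply, MonoidAlgebra.smul_single, smul_eq_mul, mul_one]
  rw [hrep]
  exact Submodule.sum_mem _ fun g _ => by
    rw [zsmul_eq_mul]
    exact Ideal.mul_mem_left _ _ (Ideal.subset_span ⟨g, rfl⟩)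

lemma card_mul_mem_sq {G : Type*} [Group G] [Fintype G] {x : MonoidAlgebra ℤ G} (hx : x ∈ Δ G) :
    (Fintype.card G : MonoidAlgebra ℤ G) * x ∈ Δ G ^ 2 := by
  refine Submodule.span_induction (p := fun z _ => (Fintype.card G : MonoidAlgebra ℤ G) * z ∈ Δ G ^ 2) ?_ ?_ ?_ ?_ (Δ_le_span G hx)
  case refine_1 =>
    rintro z ⟨g, rfl⟩
    set N := Fintype.card G with hN
    have hpow : (MonoidAlgebra.of ℤ G g) ^ N = 1 := by
      rw [← map_pow, pow_card_eq_one, map_one]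
    have h0 : (∑ i ∈ Finset.range N, (MonoidAlgebra.of ℤ G g) ^ i)
        * (MonoidAlgebra.of ℤ G g - 1) = 0 := by
      rw [geom_sum_mul, hpow, sub_self]
    have he : (N : MonoidAlgebra ℤ G) * (MonoidAlgebra.of ℤ G g - 1)
        = ((N : MonoidAlgebra ℤ G) - ∑ i ∈ Finset.range N, (MonoidAlgebra.of ℤ G g) ^ i)
          * (MonoidAlgebra.of ℤ G g - 1) := by
      rw [sub_mul, h0, sub_zero]
    rw [he, show Δ G ^ 2 = Δ G * Δ G by rw [Submodule.pow_succ, Submodule.pow_one]]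
    refine Ideal.mul_mem_mul ?_ (of_sub_one_mem G g)
    rw [mem_Δ_iff, map_sub, map_sum, map_natCast]
    simp [map_pow, aug_of, aug_single]
  case refine_2 => simp
  case refine_3 =>
    intro u v _ _ hu hv; rw [mul_add]; exact add_mem hu hv
  case refine_4 =>
    intro r u _ hu
    rw [smul_eq_mul, ← mul_assoc, (Nat.cast_commute (Fintype.card G) r).eq, mul_assoc]
    exact Ideal.mul_mem_left _ r hu

noncomputable def phiG (G H : Type*) [Group G] [Group H] :
    MonoidAlgebra ℤ G →+* MonoidAlgebra ℤ (G × H) :=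
  MonoidAlgebra.mapDomainRingHom ℤ (MonoidHom.inl G H)

noncomputable def phiH (G H : Type*) [Group G] [Group H] :
    MonoidAlgebra ℤ H →+* MonoidAlgebra ℤ (G × H) :=
  MonoidAlgebra.mapDomainRingHom ℤ (MonoidHom.inr G H)

lemma phiG_apply {G H : Type*} [Group G] [Group H] (x : MonoidAlgebra ℤ G) :
    (phiG G H x).coeff = Finsupp.mapDomain (fun g => ((g, 1) : G × H)) x.coeff := rfl

lemma phiH_apply {G H : Type*} [Group G] [Group H] (y : MonoidAlgebra ℤ H) :
    (phiH G H y).coeff = Finsupp.mapDomain (fun h => ((1, h) : G × H)) y.coeff := rfl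

lemma aug_phiG {G H : Type*} [Group G] [Group H] (x : MonoidAlgebra ℤ G) :
    aug (G × H) (phiG G H x) = aug G x := by
  rw [aug_eq_sum, aug_eq_sum, phiG_apply, Finsupp.sum_mapDomain_index] <;> simp

lemma aug_phiH {G H : Type*} [Group G] [Group H] (y : MonoidAlgebra ℤ H) :
    aug (G × H) (phiH G H y) = aug H y := by
  rw [aug_eq_sum, aug_eq_sum, phiH_apply, Finsupp.sum_mapDomain_index] <;> simp

lemma phiG_mem_Δ {G H : Type*} [Group G] [Group H] {x : MonoidAlgebra ℤ G} (hx : x ∈ Δ G) :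
    phiG G H x ∈ Δ (G × H) := by
  rw [mem_Δ_iff, aug_phiG]; exact hx

lemma phiH_mem_Δ {G H : Type*} [Group G] [Group H] {y : MonoidAlgebra ℤ H} (hy : y ∈ Δ H) :
    phiH G H y ∈ Δ (G × H) := by
  rw [mem_Δ_iff, aug_phiH]; exact hy

lemma commute_phi {G H : Type*} [Group G] [Group H] (x : MonoidAlgebra ℤ G)
    (y : MonoidAlgebra ℤ H) : Commute (phiG G H x) (phiH G H y) := by
  induction x using MonoidAlgebra.induction_linear with
  | zero => rw [map_zero]; exact Commute.zero_left _
  | add f g hf hg => rw [map_add]; exact hf.add_left hg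
  | single g a =>
    induction y using MonoidAlgebra.induction_linear with
    | zero => rw [map_zero]; exact Commute.zero_right _
    | add f' g' hf hg => rw [map_add]; exact hf.add_right hg
    | single h b =>
      have e1 : phiG G H (MonoidAlgebra.single g a) = MonoidAlgebra.single ((g, 1) : G × H) a := by
        rw [← MonoidAlgebra.coeff_inj, phiG_apply, MonoidAlgebra.coeff_single,
          MonoidAlgebra.coeff_single, Finsupp.mapDomain_single]
      have e2 : phiH G H (MonoidAlgebra.single h b) = MonoidAlgebra.single ((1, h) : G × H) b := by
        rw [← MonoidAlgebra.coeff_inj, phiH_apply, MonoidAlgebra.coeff_single,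
          MonoidAlgebra.coeff_single, Finsupp.mapDomain_single]
      rw [Commute, SemiconjBy, e1, e2, MonoidAlgebra.single_mul_single,
        MonoidAlgebra.single_mul_single]
      congr 1
      · exact Prod.ext (by simp) (by simp)
      · exact mul_comm a b

lemma bezout_combo {R : Type*} [Ring R] (a b : ℤ) (NG NH : ℕ)
    (h : a * (NG : ℤ) + b * (NH : ℤ) = 1) (w : R) :
    w = (a : R) * ((NG : R) * w) + (b : R) * ((NH : R) * w) := by
  have h1 : (a : R) * (NG : R) + (b : R) * (NH : R) = 1 := by
    have := congrArg (fun z : ℤ => (z : R)) h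
    push_cast at this
    simpa using this
  rw [← mul_assoc, ← mul_assoc, ← add_mul, h1, one_mul]

lemma key {G H : Type*} [Group G] [Group H] [Fintype G] [Fintype H]
    (hco : Nat.Coprime (Fintype.card G) (Fintype.card H)) :
    ∀ n : ℕ, ∀ x ∈ Δ G, ∀ y ∈ Δ H, phiG G H x * phiH G H y ∈ Δ (G × H) ^ n := by
  intro n
  induction n with
  | zero => intro x _ y _; rw [Submodule.pow_zero, Ideal.one_eq_top]; trivial
  | succ n ih =>
    have hG2 : ∀ x ∈ Δ G ^ 2, ∀ y ∈ Δ H, phiG G H x * phiH G H y ∈ Δ (G × H) ^ (n + 1) := by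
      intro x hx y hy
      rw [show Δ G ^ 2 = Δ G * Δ G by rw [Submodule.pow_succ, Submodule.pow_one]] at hx
      refine Submodule.mul_induction_on hx (fun a ha b hb => ?_) (fun u v hu hv => ?_)
      · have hc : phiG G H b * phiH G H y = phiH G H y * phiG G H b :=
          (commute_phi b y).eq
        rw [map_mul, mul_assoc, hc, ← mul_assoc, Submodule.pow_succ]
        exact Submodule.mul_mem_mul (ih a ha y hy) (phiG_mem_Δ hb)
      · rw [map_add, add_mul]; exact add_mem hu hv
    have hH2 : ∀ x ∈ Δ G, ∀ y ∈ Δ H ^ 2, phiG G H x * phiH G H y ∈ Δ (G × H) ^ (n + 1) := by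
      intro x hx y hy
      rw [show Δ H ^ 2 = Δ H * Δ H by rw [Submodule.pow_succ, Submodule.pow_one]] at hy
      refine Submodule.mul_induction_on hy (fun a ha b hb => ?_) (fun u v hu hv => ?_)
      · rw [map_mul, ← mul_assoc, Submodule.pow_succ]
        exact Submodule.mul_mem_mul (ih x hx a ha) (phiH_mem_Δ hb)
      · rw [map_add, mul_add]; exact add_mem hu hv
    intro x hx y hy
    obtain ⟨a, b, hab⟩ : IsCoprime ((Fintype.card G : ℤ)) ((Fintype.card H : ℤ)) := by
      rw [Int.isCoprime_iff_gcd_eq_one, Int.gcd_natCast_natCast]; exact hco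
    have k1 := hG2 _ (card_mul_mem_sq hx) y hy
    have k2 := hH2 x hx _ (card_mul_mem_sq hy)
    rw [map_mul, map_natCast] at k1 k2
    have k1' : (Fintype.card G : MonoidAlgebra ℤ (G × H)) * (phiG G H x * phiH G H y)
        ∈ Δ (G × H) ^ (n + 1) := by rwa [mul_assoc] at k1
    have k2' : (Fintype.card H : MonoidAlgebra ℤ (G × H)) * (phiG G H x * phiH G H y)
        ∈ Δ (G × H) ^ (n + 1) := by
      have hc : phiG G H x * ((Fintype.card H : MonoidAlgebra ℤ (G × H)) * phiH G H y)
          = (Fintype.card H : MonoidAlgebra ℤ (G × H)) * (phiG G H x * phiH G H y) := by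
        rw [← mul_assoc, ← (Nat.cast_commute (Fintype.card H) (phiG G H x)).eq, mul_assoc]
      rwa [hc] at k2
    rw [bezout_combo a b (Fintype.card G) (Fintype.card H) hab (phiG G H x * phiH G H y)]
    exact add_mem (Ideal.mul_mem_left _ _ k1') (Ideal.mul_mem_left _ _ k2')


theorem stmt9 (G H : Type*) [Group G] [Group H] [Fintype G] [Fintype H] [Nontrivial H]
    (hco : Nat.Coprime (Fintype.card G) (Fintype.card H))
    (hnil : ∃ α : MonoidAlgebra ℤ G, α ≠ 0 ∧ IsNilpotent α) :
    Vω (G × H) ≠ ⊥ := by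
  classical
  -- find α with α ≠ 0 and α * α = 0
  obtain ⟨α₀, hα₀, m, hm⟩ := hnil
  have hex : ∃ n, α₀ ^ n = 0 := ⟨m, hm⟩
  set n := Nat.find hex with hn_def
  have hn : α₀ ^ n = 0 := Nat.find_spec hex
  have hn2 : 2 ≤ n := by
    by_contra hlt
    interval_cases n
    · have h0 : (1 : MonoidAlgebra ℤ G) = 0 := by rwa [pow_zero] at hn
      exact one_ne_zero h0
    · exact hα₀ (by simpa using hn)
  set α := α₀ ^ (n - 1) with hα_def
  have hα : α ≠ 0 := Nat.find_min hex (by omega)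
  have hα2 : α * α = 0 := by
    rw [hα_def, ← pow_add, show n - 1 + (n - 1) = n + (n - 2) by omega, pow_add, hn, zero_mul]
  have hαΔ : α ∈ Δ G := by
    rw [mem_Δ_iff]
    have h2 : aug G α * aug G α = 0 := by rw [← map_mul, hα2, map_zero]
    exact mul_self_eq_zero.mp h2
  -- pick nontrivial h
  obtain ⟨h, hh⟩ := exists_ne (1 : H)
  set y : MonoidAlgebra ℤ H := MonoidAlgebra.of ℤ H h - 1 with hy_def
  have hyΔ : y ∈ Δ H := of_sub_one_mem H h
  set β : MonoidAlgebra ℤ (G × H) := phiG G H α * phiH G H y with hβ_def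
  have hβn : ∀ k : ℕ, β ∈ Δ (G × H) ^ k := fun k => key hco k α hαΔ y hyΔ
  -- β ≠ 0
  have hβ_ne : β ≠ 0 := by
    obtain ⟨g₀, hg₀⟩ : ∃ g, α.coeff g ≠ 0 := by
      by_contra hc
      push_neg at hc
      exact hα (MonoidAlgebra.ext (Finsupp.ext fun g => hc g))
    have hy' : phiH G H y = MonoidAlgebra.single ((1, h) : G × H) 1 - 1 := by
      rw [hy_def, map_sub, map_one, MonoidAlgebra.of_apply, phiH, MonoidAlgebra.mapDomainRingHom,
        RingHom.coe_mk, MonoidHom.coe_mk, OneHom.coe_mk, MonoidAlgebra.mapDomain_single]; rfl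
    set z : MonoidAlgebra ℤ (G × H) := MonoidAlgebra.single ((1, h) : G × H) (1 : ℤ) with hz_def
    have heval : β.coeff (g₀, h) = α.coeff g₀ := by
      rw [hβ_def, hy', mul_sub, mul_one, MonoidAlgebra.coeff_sub, Finsupp.sub_apply]
      have h1 : (phiG G H α * z).coeff (g₀, h) = α.coeff g₀ := by
        rw [hz_def, MonoidAlgebra.coeff_mul_single_apply]
        have : ((g₀, h) : G × H) * (1, h)⁻¹ = (g₀, 1) := by
          ext <;> simp
        rw [this, mul_one, phiG_apply,
          Finsupp.mapDomain_apply (fun g g' (e : ((g,1):G×H) = (g',1)) => congrArg Prod.fst e) α.coeff g₀]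
      have h2 : (phiG G H α).coeff (g₀, h) = 0 := by
        rw [phiG_apply]
        refine Finsupp.mapDomain_notin_range α.coeff (g₀, h) ?_
        rintro ⟨g, hg⟩
        exact hh (congrArg Prod.snd hg).symm
      rw [h1, h2, sub_zero]
    intro hβ0
    rw [hβ0] at heval
    exact hg₀ (by simpa using heval.symm)
  -- β is square zero
  have hβ2 : β * β = 0 := by
    have hc : phiH G H y * phiG G H α = phiG G H α * phiH G H y := (commute_phi α y).symm.eq
    have : β * β = phiG G H α * (phiH G H y * phiG G H α) * phiH G H y := by
      rw [hβ_def]; simp only [mul_assoc]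
    rw [this, hc, ← mul_assoc, ← map_mul, hα2, map_zero, zero_mul, zero_mul]
  -- the unit
  have hinv : ((1 : MonoidAlgebra ℤ (G × H)) + β) * (1 - β) = 1 := by
    have : ((1 : MonoidAlgebra ℤ (G × H)) + β) * (1 - β) = 1 - β * β := by noncomm_ring
    rw [this, hβ2, sub_zero]
  have hinv' : ((1 : MonoidAlgebra ℤ (G × H)) - β) * (1 + β) = 1 := by
    have : ((1 : MonoidAlgebra ℤ (G × H)) - β) * (1 + β) = 1 - β * β := by noncomm_ring
    rw [this, hβ2, sub_zero]
  set u : (MonoidAlgebra ℤ (G × H))ˣ := ⟨1 + β, 1 - β, hinv, hinv'⟩ with hu_def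
  have hu_aug : aug (G × H) ((u : (MonoidAlgebra ℤ (G × H))ˣ) : MonoidAlgebra ℤ (G × H)) = 1 := by
    have hβΔ : aug (G × H) β = 0 := by
      have := hβn 1
      rw [Submodule.pow_one] at this
      exact this
    show aug (G × H) (1 + β) = 1
    rw [map_add, map_one, hβΔ, add_zero]
  have huV : u ∈ V (G × H) := by
    rw [V, MonoidHom.mem_ker]
    ext
    simpa using hu_aug
  have huω : u ∈ Vω (G × H) := by
    rw [Vω, Subgroup.mem_iInf]
    intro k
    refine ⟨huV, ?_⟩
    have : ((u : (MonoidAlgebra ℤ (G × H))ˣ) : MonoidAlgebra ℤ (G × H)) - 1 = β := by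
      show 1 + β - 1 = β
      rw [add_sub_cancel_left]
    rw [this]
    exact hβn (k + 1)
  have hu_ne : u ≠ 1 := by
    intro hu1
    have : (1 : MonoidAlgebra ℤ (G × H)) + β = 1 := by
      have := congrArg (fun v : (MonoidAlgebra ℤ (G × H))ˣ => (v : MonoidAlgebra ℤ (G × H))) hu1
      exact this
    exact hβ_ne (by rwa [add_eq_left] at this)
  rw [Subgroup.ne_bot_iff_exists_ne_one]
  exact ⟨⟨u, huω⟩, by simpa [Subtype.ext_iff] using hu_ne⟩
end

section
/- Let G be a residually nilpotent group such that V_ω(ℤ[G/γ_n(G)]) = {1} for all n ≥ 1. Then V_ω(ℤG) = {1}. -/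
open MonoidAlgebra

lemma aug_mapDomain {G H : Type*} [Group G] [Group H] (f : G →* H)
    (x : MonoidAlgebra ℤ G) :
    aug H (MonoidAlgebra.mapDomainRingHom ℤ f x) = aug G x := by
  induction x using MonoidAlgebra.induction with
  | zero => simp
  | single_add g a x _ _ ih =>
    rw [map_add, map_add, map_add, ih]
    congr 1
    show aug H (MonoidAlgebra.mapDomain f (MonoidAlgebra.single g a)) = aug G (MonoidAlgebra.single g a)
    rw [MonoidAlgebra.mapDomain_single]
    simp [aug, MonoidAlgebra.lift_single]

lemma mapDomain_eq_zero_of_forall {G : Type*} [Group G]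
    (hres : (⨅ n : ℕ, (⊤ : Subgroup G).lowerCentralSeries n) = ⊥) (x : MonoidAlgebra ℤ G)
    (hx : ∀ n : ℕ, MonoidAlgebra.mapDomainRingHom ℤ
      (QuotientGroup.mk' ((⊤ : Subgroup G).lowerCentralSeries n)) x = 0) : x = 0 := by
  classical
  by_contra hx0
  obtain ⟨g₀, hg₀⟩ := (Finsupp.support_nonempty_iff (f := x.coeff)).mpr (fun hc => hx0 (MonoidAlgebra.coeff_inj.mp (by simpa using hc)))
  have key : ∀ p : G × G, ∃ n : ℕ, p.1 ≠ p.2 → p.1⁻¹ * p.2 ∉ (⊤ : Subgroup G).lowerCentralSeries n := by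
    intro p
    by_cases hp : p.1 = p.2
    · exact ⟨0, fun h => absurd hp h⟩
    · have hne : p.1⁻¹ * p.2 ≠ 1 := by
        intro hcon
        exact hp (by rw [← inv_inv p.1, ← mul_one p.1⁻¹⁻¹, ← hcon, ← mul_assoc, inv_mul_cancel,
          one_mul])
      have : p.1⁻¹ * p.2 ∉ (⨅ n : ℕ, (⊤ : Subgroup G).lowerCentralSeries n) := by
        rw [hres, Subgroup.mem_bot]; exact hne
      rw [Subgroup.mem_iInf] at this
      push_neg at this
      obtain ⟨n, hn⟩ := this
      exact ⟨n, fun _ => hn⟩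
  choose nn hnn using key
  set P : Finset (G × G) := x.coeff.support ×ˢ x.coeff.support with hP
  set N : ℕ := P.sup nn with hN
  have hinj : Set.InjOn (QuotientGroup.mk' ((⊤ : Subgroup G).lowerCentralSeries N)) ↑x.coeff.support := by
    intro g hg h hh hgh
    by_contra hne
    have hmem : g⁻¹ * h ∈ (⊤ : Subgroup G).lowerCentralSeries N := by
      have hk : g⁻¹ * h ∈ (QuotientGroup.mk' ((⊤ : Subgroup G).lowerCentralSeries N)).ker := by
        rw [MonoidHom.mem_ker, map_mul, map_inv, hgh, inv_mul_cancel]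
      rwa [QuotientGroup.ker_mk'] at hk
    have hPmem : (g, h) ∈ P := Finset.mk_mem_product hg hh
    have hle : nn (g, h) ≤ N := Finset.le_sup hPmem
    exact hnn (g, h) hne (Subgroup.lowerCentralSeries_antitone _ hle hmem)
  have := hx N
  have happ : Finsupp.mapDomain (QuotientGroup.mk' ((⊤ : Subgroup G).lowerCentralSeries N)) x.coeff
      ((QuotientGroup.mk' ((⊤ : Subgroup G).lowerCentralSeries N)) g₀) = x.coeff g₀ :=
    Finsupp.mapDomain_apply' ↑x.coeff.support x.coeff (by simp) hinj hg₀
  have h0 : Finsupp.mapDomain (QuotientGroup.mk' ((⊤ : Subgroup G).lowerCentralSeries N)) x.coeff = 0 :=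
    congrArg MonoidAlgebra.coeff this
  rw [h0] at happ
  exact (Finsupp.mem_support_iff.mp hg₀) happ.symm

theorem stmt15 (G : Type*) [Group G]
    (hres : (⨅ n : ℕ, (⊤ : Subgroup G).lowerCentralSeries n) = ⊥)
    (h : ∀ n : ℕ, Vω (G ⧸ (⊤ : Subgroup G).lowerCentralSeries n) = ⊥) :
    Vω G = ⊥ := by
  rw [eq_bot_iff]
  intro u hu
  rw [Subgroup.mem_bot]
  rw [Vω, Subgroup.mem_iInf] at hu
  -- `u` is mapped to `1` in each quotient group algebra
  have hmap : ∀ n : ℕ, MonoidAlgebra.mapDomainRingHom ℤ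
      (QuotientGroup.mk' ((⊤ : Subgroup G).lowerCentralSeries n)) ((u : MonoidAlgebra ℤ G) - 1) = 0 := by
    intro n
    set H := G ⧸ (⊤ : Subgroup G).lowerCentralSeries n
    set φ : MonoidAlgebra ℤ G →+* MonoidAlgebra ℤ H :=
      MonoidAlgebra.mapDomainRingHom ℤ (QuotientGroup.mk' ((⊤ : Subgroup G).lowerCentralSeries n)) with hφ
    have haug : ∀ y : MonoidAlgebra ℤ G, y ∈ Δ G → φ y ∈ Δ H := by
      intro y hy
      simp only [Δ, RingHom.mem_ker] at hy ⊢
      rw [show ((aug H).toRingHom : MonoidAlgebra ℤ H →+* ℤ) (φ y) = aug H (φ y) from rfl,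
        aug_mapDomain]
      exact hy
    have hΔ : ∀ (k : ℕ) (y : MonoidAlgebra ℤ G), y ∈ Δ G ^ k → φ y ∈ Δ H ^ k := by
      intro k
      induction k with
      | zero =>
        intro y _
        rw [Submodule.pow_zero, Ideal.one_eq_top]
        exact Submodule.mem_top
      | succ k ih =>
        intro y hy
        rw [Submodule.pow_succ] at hy ⊢
        refine Submodule.mul_induction_on hy ?_ ?_
        · intro a ha b hb
          rw [map_mul]
          exact Submodule.mul_mem_mul (ih a ha) (haug b hb)
        · intro a b ha hb
          rw [map_add]; exact add_mem ha hb
    set v : (MonoidAlgebra ℤ H)ˣ := Units.map φ.toMonoidHom u with hv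
    have hvV : v ∈ V H := by
      rw [V, MonoidHom.mem_ker]
      ext
      show aug H (φ (u : MonoidAlgebra ℤ G)) = 1
      rw [aug_mapDomain]
      have := (hu 0).1
      rw [V, MonoidHom.mem_ker] at this
      have := congrArg Units.val this
      exact this
    have hvω : v ∈ Vω H := by
      rw [Vω, Subgroup.mem_iInf]
      intro m
      refine ⟨hvV, ?_⟩
      have hum : (u : MonoidAlgebra ℤ G) - 1 ∈ Δ G ^ (m + 1) := (hu m).2
      have h1 : (v : MonoidAlgebra ℤ H) - 1 = φ ((u : MonoidAlgebra ℤ G) - 1) := by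
        rw [map_sub, map_one]; rfl
      rw [h1]
      exact hΔ (m + 1) _ hum
    rw [h n, Subgroup.mem_bot] at hvω
    have : (v : MonoidAlgebra ℤ H) = 1 := by rw [hvω]; rfl
    have h2 : φ ((u : MonoidAlgebra ℤ G) - 1) = 0 := by
      rw [map_sub, map_one]
      show (v : MonoidAlgebra ℤ H) - 1 = 0
      rw [this, sub_self]
    exact h2
  have h1 : (u : MonoidAlgebra ℤ G) - 1 = 0 := mapDomain_eq_zero_of_forall hres _ hmap
  exact Units.ext (by simpa using sub_eq_zero.mp h1)
end

section
/- Let C be the class of groups K with V_ω(ℤK) = {1}. If a group G is discriminated by C (for any finitely many distinct elements of G there is a homomorphism to a member of C keeping them distinct), then G ∈ C, i.e., V_ω(ℤG) = {1}. -/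
open MonoidAlgebra

theorem stmt16 {G : Type u} [Group G]
    (h : ∀ s : Finset G, ∃ (H : Type v) (_ : Group H) (φ : G →* H),
      Vω H = ⊥ ∧ Set.InjOn φ ↑s) :
    Vω G = ⊥ := by
  classical
  rw [Subgroup.eq_bot_iff_forall]
  intro u hu
  have humem : ∀ n : ℕ, u ∈ Vn G (n + 1) := by
    intro n
    exact (Subgroup.mem_iInf.mp hu) n
  obtain ⟨H, _, φ, hVω, hinj⟩ := h (insert 1 (u : MonoidAlgebra ℤ G).coeff.support)
  set ψ : MonoidAlgebra ℤ G →ₐ[ℤ] MonoidAlgebra ℤ H :=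
    MonoidAlgebra.mapDomainAlgHom ℤ ℤ φ with hψ
  -- aug commutes
  have haug : ∀ x : MonoidAlgebra ℤ G, aug H (ψ x) = aug G x := by
    have : (aug H).comp ψ = aug G := by
      apply MonoidAlgebra.algHom_ext
      intro g
      simp [ψ, aug, MonoidAlgebra.mapDomainAlgHom_apply, Finsupp.mapDomain_single]
      exact Subsingleton.elim _ _
    intro x
    calc aug H (ψ x) = ((aug H).comp ψ) x := rfl
    _ = aug G x := by rw [this]
  -- ψ maps Δ G into Δ H
  have hΔ : Ideal.map ψ.toRingHom (Δ G) ≤ Δ H := by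
    rw [Ideal.map_le_iff_le_comap]
    intro x hx
    simp only [Ideal, Δ, RingHom.mem_ker, Ideal.mem_comap] at *
    show aug H (ψ x) = 0
    rw [haug x]
    exact hx
  have hΔ' : ∀ x ∈ Δ G, ψ x ∈ Δ H := fun x hx =>
    hΔ (Ideal.mem_map_of_mem _ hx)
  have hΔn : ∀ n : ℕ, ∀ x ∈ Δ G ^ n, ψ x ∈ Δ H ^ n := by
    intro n
    induction n with
    | zero =>
      intro x _
      rw [Submodule.pow_zero, Ideal.one_eq_top]
      trivial
    | succ n ih =>
      intro x hx
      rw [Submodule.pow_succ] at hx ⊢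
      refine Submodule.mul_induction_on hx ?_ ?_
      · intro m hm i hi
        rw [map_mul]
        exact Submodule.mul_mem_mul (ih m hm) (hΔ' i hi)
      · intro a b ha hb
        rw [map_add]
        exact add_mem ha hb
  -- the image unit
  set w : (MonoidAlgebra ℤ H)ˣ := Units.map ψ.toRingHom.toMonoidHom u with hw
  have hwmem : w ∈ Vω H := by
    rw [Vω, Subgroup.mem_iInf]
    intro n
    obtain ⟨huV, huΔ⟩ := humem n
    refine ⟨?_, ?_⟩
    · -- w ∈ V H
      simp only [V, MonoidHom.mem_ker] at huV ⊢
      ext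
      simp only [Units.val_one]
      show aug H (w : MonoidAlgebra ℤ H) = 1
      have : aug G (u : MonoidAlgebra ℤ G) = 1 := by
        have := congrArg Units.val huV
        simpa using this
      rw [hw]
      show aug H (ψ (u : MonoidAlgebra ℤ G)) = 1
      rw [haug]; exact this
    · show (w : MonoidAlgebra ℤ H) - 1 ∈ Δ H ^ (n + 1)
      have : (w : MonoidAlgebra ℤ H) - 1 = ψ ((u : MonoidAlgebra ℤ G) - 1) := by
        rw [hw]; show _ = ψ _ ; rw [map_sub, map_one]; rfl
      rw [this]
      exact hΔn (n + 1) _ huΔ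
  have hw1 : w = 1 := by
    rw [hVω] at hwmem
    exact hwmem
  -- conclude u = 1
  have hval : ψ (u : MonoidAlgebra ℤ G) = 1 := by
    have := congrArg Units.val hw1
    simpa [hw] using this
  have h1 : ψ (1 : MonoidAlgebra ℤ G) = 1 := map_one ψ
  have huval : (u : MonoidAlgebra ℤ G) = 1 := by
    have hkey := Finsupp.mapDomain_injOn (M := ℤ)
      ((insert 1 (u : MonoidAlgebra ℤ G).coeff.support : Finset G) : Set G) hinj
    apply MonoidAlgebra.coeff_injective
    apply hkey
    · intro g hg
      simp only [Finset.coe_insert, Set.mem_insert_iff, Finset.mem_coe]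
      exact Or.inr (Finsupp.mem_support_iff.mpr (by simpa using hg))
    · intro g hg
      have hsupp : (1 : MonoidAlgebra ℤ G).coeff.support ⊆ {1} := by
        rw [MonoidAlgebra.one_def]
        exact Finsupp.support_single_subset
      have hg1 : g = 1 := by
        have := hsupp (by simpa using hg)
        simpa using this
      simp only [Finset.coe_insert, Set.mem_insert_iff, Finset.mem_coe]
      exact Or.inl hg1
    · show Finsupp.mapDomain φ (u : MonoidAlgebra ℤ G).coeff =
        Finsupp.mapDomain φ (1 : MonoidAlgebra ℤ G).coeff
      have e1 : Finsupp.mapDomain φ (u : MonoidAlgebra ℤ G).coeff = (ψ (u : MonoidAlgebra ℤ G)).coeff := rfl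
      have e2 : Finsupp.mapDomain φ (1 : MonoidAlgebra ℤ G).coeff = (ψ 1).coeff := rfl
      rw [e1, e2, hval, h1]
  exact Units.ext huval
end

section
/- Let G be a group, g ∈ D_{ω,ℚ}(G) (so for each n there is m ≥ 1 with m(g-1) ∈ Δⁿ(G)), and let g₁ ∈ G satisfy g₁ ∈ γ_l(G)·G^{p^k} for all primes p and all natural numbers l, k. Then [g₁, g] ∈ D_ω(G), i.e., [g₁,g] - 1 ∈ Δⁿ(G) for all n ≥ 1. -/
open MonoidAlgebra

open Pointwise

/-- The augmentation map `ℚG → ℚ`. -/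
noncomputable def augQ (G : Type*) [Group G] : MonoidAlgebra ℚ G →ₐ[ℚ] ℚ :=
  (MonoidAlgebra.lift ℚ ℚ G) 1

/-- The augmentation ideal of the rational group algebra `ℚG`. -/
noncomputable def ΔQ (G : Type*) [Group G] : Ideal (MonoidAlgebra ℚ G) :=
  RingHom.ker (augQ G).toRingHom

section IdealAux
variable {A : Type*} [Ring A]

lemma myIdeal.one_eq_top : (1 : Ideal A) = ⊤ := by
  rw [Submodule.one_eq_span, eq_top_iff]
  intro x _
  exact Submodule.mem_span_singleton.2 ⟨x, by simp⟩

lemma myIdeal.mul_mem_left (I : Ideal A) (r : A) {x : A} (hx : x ∈ I) : r * x ∈ I := by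
  simpa [smul_eq_mul] using I.smul_mem r hx

/-- Powers of a right-stable (two-sided) ideal are right-stable. -/
lemma myIdeal.pow_rstab (I : Ideal A) (hI : ∀ x ∈ I, ∀ r : A, x * r ∈ I) (n : ℕ) :
    ∀ x ∈ I ^ n, ∀ r : A, x * r ∈ I ^ n := by
  induction n with
  | zero =>
    intro x _ r
    rw [Submodule.pow_zero, myIdeal.one_eq_top]
    trivial
  | succ n ih =>
    intro x hx r
    rw [Submodule.pow_succ] at hx ⊢
    exact Submodule.mul_induction_on hx
      (fun u hu v hv => by rw [mul_assoc]; exact Submodule.mul_mem_mul hu (hI v hv r))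
      (fun u v hu hv => by rw [add_mul]; exact add_mem hu hv)

/-- For a right-stable ideal, `I * I^n ⊆ I^(n+1)`. -/
lemma myIdeal.mul_mem_pow_succ (I : Ideal A) (hI : ∀ x ∈ I, ∀ r : A, x * r ∈ I) :
    ∀ n : ℕ, ∀ x ∈ I, ∀ y ∈ I ^ n, x * y ∈ I ^ (n + 1) := by
  intro n
  induction n with
  | zero =>
    intro x hx y _
    rw [Submodule.pow_one]
    exact hI x hx y
  | succ n ih =>
    intro x hx y hy
    rw [Submodule.pow_succ] at hy
    exact Submodule.mul_induction_on hy
      (fun u hu v hv => by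
        rw [← mul_assoc, Submodule.pow_succ (n := n+1)]
        exact Submodule.mul_mem_mul (ih x hx u hu) hv)
      (fun u v hu hv => by rw [mul_add]; exact add_mem hu hv)
end IdealAux

section GrpRing
variable {G : Type*} [Group G]

lemma Δ_rstab : ∀ x ∈ Δ G, ∀ r : MonoidAlgebra ℤ G, x * r ∈ Δ G := by
  intro x hx r
  simp only [Δ, RingHom.mem_ker] at hx ⊢
  rw [map_mul, hx, zero_mul]

/-- The subgroup of `G` of elements `z` with `z - 1 ∈ I`. -/
def Tsub (I : Ideal (MonoidAlgebra ℤ G)) : Subgroup G where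
  carrier := {z | MonoidAlgebra.of ℤ G z - 1 ∈ I}
  one_mem' := by simp only [Set.mem_setOf_eq, map_one, sub_self]; exact zero_mem I
  mul_mem' := by
    intro a b ha hb
    have h : MonoidAlgebra.of ℤ G (a * b) - 1 =
        MonoidAlgebra.of ℤ G a * (MonoidAlgebra.of ℤ G b - 1) + (MonoidAlgebra.of ℤ G a - 1) := by
      rw [map_mul]; noncomm_ring
    simp only [Set.mem_setOf_eq] at *
    rw [h]
    exact add_mem (myIdeal.mul_mem_left I _ hb) ha
  inv_mem' := by
    intro a ha
    have h : MonoidAlgebra.of ℤ G a⁻¹ - 1 =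
        -(MonoidAlgebra.of ℤ G a⁻¹ * (MonoidAlgebra.of ℤ G a - 1)) := by
      rw [mul_sub, ← map_mul, inv_mul_cancel, map_one]; noncomm_ring
    simp only [Set.mem_setOf_eq] at *
    rw [h]
    exact neg_mem (myIdeal.mul_mem_left I _ ha)

lemma mem_Tsub {I : Ideal (MonoidAlgebra ℤ G)} {z : G} :
    z ∈ Tsub I ↔ MonoidAlgebra.of ℤ G z - 1 ∈ I := Iff.rfl

lemma lcs_le_Tsub (n : ℕ) : (⊤ : Subgroup G).lowerCentralSeries n ≤ Tsub (Δ G ^ n) := by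
  induction n with
  | zero =>
    intro z _
    rw [mem_Tsub, Submodule.pow_zero, myIdeal.one_eq_top]
    trivial
  | succ n ih =>
    show ⁅(⊤ : Subgroup G).lowerCentralSeries n, (⊤ : Subgroup G)⁆ ≤ _
    rw [Subgroup.commutator_le]
    intro a ha b _
    rw [mem_Tsub, commutatorElement_def]
    have ha' : MonoidAlgebra.of ℤ G a - 1 ∈ Δ G ^ n := ih ha
    set x := MonoidAlgebra.of ℤ G a
    set y := MonoidAlgebra.of ℤ G b
    have key : MonoidAlgebra.of ℤ G (a * b * a⁻¹ * b⁻¹) - 1 =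
        ((x - 1) * (y - 1) - (y - 1) * (x - 1)) * MonoidAlgebra.of ℤ G (a⁻¹ * b⁻¹) := by
      have h1 : MonoidAlgebra.of ℤ G (a * b * a⁻¹ * b⁻¹) =
          x * y * MonoidAlgebra.of ℤ G (a⁻¹ * b⁻¹) := by
        simp only [x, y, ← map_mul, mul_assoc]
      have h2 : (1 : MonoidAlgebra ℤ G) = y * x * MonoidAlgebra.of ℤ G (a⁻¹ * b⁻¹) := by
        rw [show y * x = MonoidAlgebra.of ℤ G (b * a) from (map_mul _ _ _).symm, ← map_mul,
          ← map_one (MonoidAlgebra.of ℤ G)]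
        congr 1
        group
      rw [h1]
      nth_rewrite 1 [h2]
      noncomm_ring
    rw [key]
    have hmem : (x - 1) * (y - 1) - (y - 1) * (x - 1) ∈ Δ G ^ (n + 1) := by
      have t1 : (x - 1) * (y - 1) ∈ Δ G ^ (n + 1) := by
        rw [Submodule.pow_succ]
        exact Submodule.mul_mem_mul ha' (of_sub_one_mem G b)
      have t2 : (y - 1) * (x - 1) ∈ Δ G ^ (n + 1) :=
        myIdeal.mul_mem_pow_succ (Δ G) Δ_rstab n _ (of_sub_one_mem G b) _ ha'
      exact sub_mem t1 t2
    exact myIdeal.pow_rstab (Δ G) Δ_rstab (n + 1) _ hmem _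

end GrpRing

section QZ
variable {G : Type*} [Group G]

/-- The canonical map `ℤG → ℚG`. -/
noncomputable def φ (G : Type*) [Group G] : MonoidAlgebra ℤ G →ₐ[ℤ] MonoidAlgebra ℚ G :=
  (MonoidAlgebra.lift ℤ (MonoidAlgebra ℚ G) G) (MonoidAlgebra.of ℚ G)

lemma φ_single (g : G) (c : ℤ) :
    φ G (MonoidAlgebra.single g c) = MonoidAlgebra.single g (c : ℚ) := by
  have h1 : (MonoidAlgebra.single g c : MonoidAlgebra ℤ G) = c • MonoidAlgebra.single g (1 : ℤ) := by
    rw [MonoidAlgebra.smul_single]; norm_num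
  rw [h1, map_zsmul, φ, MonoidAlgebra.lift_single, one_smul, MonoidAlgebra.of_apply,
    MonoidAlgebra.smul_single]
  norm_num

lemma φ_apply (x : MonoidAlgebra ℤ G) (g : G) : (φ G x).coeff g = ((x.coeff g : ℤ) : ℚ) := by
  induction x using MonoidAlgebra.induction_linear with
  | zero => simp
  | add u v hu hv => rw [map_add, MonoidAlgebra.coeff_add, MonoidAlgebra.coeff_add, Finsupp.add_apply, Finsupp.add_apply, hu, hv]; push_cast; ring
  | single a b =>
    show (φ G (MonoidAlgebra.single a b)).coeff g = _
    rw [φ_single]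
    by_cases h : a = g <;> simp [MonoidAlgebra.coeff_single, Finsupp.single_apply, h]

lemma φ_inj : Function.Injective (φ G) := by
  intro x y h
  ext g
  have := congrArg (fun z : MonoidAlgebra ℚ G => z.coeff g) h
  simp only [φ_apply] at this
  exact_mod_cast this

lemma augQ_φ (x : MonoidAlgebra ℤ G) : augQ G (φ G x) = ((aug G x : ℤ) : ℚ) := by
  induction x using MonoidAlgebra.induction_linear with
  | zero => simp
  | add u v hu hv => rw [map_add, map_add, map_add, hu, hv]; push_cast; ring
  | single a b =>
    show augQ G (φ G (MonoidAlgebra.single a b)) = ((aug G (MonoidAlgebra.single a b) : ℤ) : ℚ)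
    rw [φ_single]
    simp [augQ, aug, MonoidAlgebra.lift_single]

/-- Clearing denominators. -/
lemma clear_denom (x : MonoidAlgebra ℚ G) :
    ∃ m : ℕ, 0 < m ∧ ∃ y : MonoidAlgebra ℤ G, φ G y = (m : ℚ) • x := by
  classical
  set m : ℕ := ∏ g ∈ x.coeff.support, (x.coeff g).den with hm
  have hmpos : 0 < m := Finset.prod_pos fun g _ => (x.coeff g).pos
  refine ⟨m, hmpos, MonoidAlgebra.ofCoeff (Finsupp.mapRange (fun q => ((m : ℚ) * q).num) (by simp) x.coeff), ?_⟩
  ext g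
  rw [φ_apply, MonoidAlgebra.coeff_ofCoeff, Finsupp.mapRange_apply, MonoidAlgebra.coeff_smul_apply, smul_eq_mul]
  by_cases hg : x.coeff g = 0
  · simp [hg]
  · have hden : ((x.coeff g).den : ℤ) ∣ (m : ℤ) :=
      Int.natCast_dvd_natCast.mpr (Finset.dvd_prod_of_mem _ (Finsupp.mem_support_iff.mpr hg))
    obtain ⟨t, ht⟩ := hden
    have hint : (m : ℚ) * x.coeff g = ((t * (x.coeff g).num : ℤ) : ℚ) := by
      have h2 : ((x.coeff g).den : ℚ) * x.coeff g = ((x.coeff g).num : ℚ) := by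
        rw [mul_comm]; exact_mod_cast Rat.mul_den_eq_num (x.coeff g)
      have h1 : (m : ℚ) = ((x.coeff g).den : ℚ) * (t : ℚ) := by exact_mod_cast ht
      push_cast
      rw [h1, mul_comm ((x.coeff g).den : ℚ) (t : ℚ), mul_assoc, h2]
    rw [hint, Rat.num_intCast]

/-- Main rationalization lemma: elements of `ΔQ^n` can be scaled into the image of `Δ^n`. -/
lemma lemQ (n : ℕ) : ∀ x ∈ ΔQ G ^ n,
    ∃ m : ℕ, 0 < m ∧ ∃ y ∈ Δ G ^ n, φ G y = (m : ℚ) • x := by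
  induction n with
  | zero =>
    intro x _
    obtain ⟨m, hm, y, hy⟩ := clear_denom x
    exact ⟨m, hm, y, by rw [Submodule.pow_zero, myIdeal.one_eq_top]; trivial, hy⟩
  | succ n ih =>
    intro x hx
    rw [Submodule.pow_succ] at hx
    refine Submodule.mul_induction_on hx ?_ ?_
    · intro a ha b hb
      obtain ⟨m₁, hm₁, y₁, hy₁, hy₁'⟩ := ih a ha
      obtain ⟨m₂, hm₂, y₂, hy₂'⟩ := clear_denom b
      have hy₂ : y₂ ∈ Δ G := by
        rw [Δ, RingHom.mem_ker]
        have h0 : ((aug G y₂ : ℤ) : ℚ) = 0 := by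
          rw [← augQ_φ, hy₂', map_smul, show augQ G b = 0 from hb, smul_zero]
        exact_mod_cast h0
      refine ⟨m₁ * m₂, Nat.mul_pos hm₁ hm₂, y₁ * y₂, ?_, ?_⟩
      · rw [Submodule.pow_succ]
        exact Submodule.mul_mem_mul hy₁ hy₂
      · rw [map_mul, hy₁', hy₂', smul_mul_smul_comm]
        norm_cast
    · intro u v hu hv
      obtain ⟨m₁, hm₁, y₁, hy₁, hy₁'⟩ := hu
      obtain ⟨m₂, hm₂, y₂, hy₂, hy₂'⟩ := hv
      refine ⟨m₁ * m₂, Nat.mul_pos hm₁ hm₂, (m₂ : ℤ) • y₁ + (m₁ : ℤ) • y₂,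
        add_mem (zsmul_mem hy₁ _) (zsmul_mem hy₂ _), ?_⟩
      rw [map_add, map_zsmul, map_zsmul, hy₁', hy₂', smul_add]
      have e1 : ((m₂ : ℤ) : ℚ) • ((m₁ : ℚ) • u) = ((m₁ * m₂ : ℕ) : ℚ) • u := by
        rw [smul_smul]; norm_cast; rw [mul_comm]
      have e2 : ((m₁ : ℤ) : ℚ) • ((m₂ : ℚ) • v) = ((m₁ * m₂ : ℕ) : ℚ) • v := by
        rw [smul_smul]; norm_cast
      rw [← Int.cast_smul_eq_zsmul ℚ, ← Int.cast_smul_eq_zsmul ℚ, e1, e2]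

end QZ

section Ppow
variable {G : Type*} [Group G]

/-- Span of a central natural number is right-stable. -/
lemma span_nat_rstab (q : ℕ) :
    ∀ x ∈ Ideal.span {((q : ℕ) : MonoidAlgebra ℤ G)}, ∀ r, x * r ∈
      Ideal.span {((q : ℕ) : MonoidAlgebra ℤ G)} := by
  intro x hx r
  obtain ⟨c, hc⟩ := Submodule.mem_span_singleton.1 hx
  rw [← hc, smul_eq_mul, mul_assoc, (Nat.cast_commute q r).eq, ← mul_assoc]
  exact Submodule.mem_span_singleton.2 ⟨c * r, by rw [smul_eq_mul]⟩

lemma delta_pow_succ_le (n : ℕ) : Δ G ^ (n + 1) ≤ Δ G ^ n := by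
  rw [Submodule.pow_succ]
  exact Submodule.mul_le.2 fun x hx y hy => myIdeal.pow_rstab (Δ G) Δ_rstab n x hx y

/-- Right-stability of `p^a ℤG + Δ^b`. -/
lemma S_rstab (q b : ℕ) :
    ∀ x ∈ Ideal.span {((q : ℕ) : MonoidAlgebra ℤ G)} ⊔ Δ G ^ b, ∀ r, x * r ∈
      Ideal.span {((q : ℕ) : MonoidAlgebra ℤ G)} ⊔ Δ G ^ b := by
  intro x hx r
  obtain ⟨s, hs, d, hd, rfl⟩ := Submodule.mem_sup.1 hx
  rw [add_mul]
  exact add_mem (le_sup_left (α := Ideal (MonoidAlgebra ℤ G)) (span_nat_rstab q s hs r))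
    (le_sup_right (α := Ideal (MonoidAlgebra ℤ G)) (myIdeal.pow_rstab (Δ G) Δ_rstab b d hd r))

/-- The ideal `pℤG + Δ(G)`. -/
noncomputable def Ip (G : Type*) [Group G] (p : ℕ) : Ideal (MonoidAlgebra ℤ G) :=
  Ideal.span {((p : ℕ) : MonoidAlgebra ℤ G)} ⊔ Δ G

lemma Ip_rstab (p : ℕ) : ∀ x ∈ Ip G p, ∀ r, x * r ∈ Ip G p := by
  intro x hx r
  obtain ⟨s, hs, d, hd, rfl⟩ := Submodule.mem_sup.1 hx
  rw [add_mul]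
  exact add_mem (le_sup_left (α := Ideal (MonoidAlgebra ℤ G)) (span_nat_rstab p s hs r))
    (le_sup_right (α := Ideal (MonoidAlgebra ℤ G)) (Δ_rstab d hd r))

/-- `(pℤG + Δ)^(a+b) ⊆ p^a ℤG + Δ^b`. -/
lemma Sclaim (p : ℕ) : ∀ a b : ℕ, Ip G p ^ (a + b) ≤
    Ideal.span {((p ^ a : ℕ) : MonoidAlgebra ℤ G)} ⊔ Δ G ^ b := by
  intro a
  induction a with
  | zero =>
    intro b
    have h : Ideal.span {((p ^ 0 : ℕ) : MonoidAlgebra ℤ G)} = ⊤ := by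
      rw [pow_zero, Nat.cast_one, Ideal.span_singleton_one]
    rw [h, top_sup_eq]
    exact le_top
  | succ a iha =>
    intro b
    induction b with
    | zero =>
      rw [Submodule.pow_zero, myIdeal.one_eq_top, sup_top_eq]
      exact le_top
    | succ b ihb =>
      rw [show a + 1 + (b + 1) = (a + 1 + b) + 1 from rfl, Submodule.pow_succ]
      refine Submodule.mul_le.2 fun z hz x hx => ?_
      have hz1 : z ∈ Ideal.span {((p ^ a : ℕ) : MonoidAlgebra ℤ G)} ⊔ Δ G ^ (b + 1) :=
        iha (b + 1) (by rw [show a + (b + 1) = a + 1 + b from by omega]; exact hz)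
      have hz2 : z ∈ Ideal.span {((p ^ (a + 1) : ℕ) : MonoidAlgebra ℤ G)} ⊔ Δ G ^ b := ihb hz
      obtain ⟨s, hs, d, hd, rfl⟩ := Submodule.mem_sup.1 hx
      rw [mul_add]
      refine add_mem ?_ ?_
      · -- z * s  with  s ∈ span {p}
        obtain ⟨c, hc⟩ := Submodule.mem_span_singleton.1 hs
        rw [← hc, smul_eq_mul, ← mul_assoc]
        have hzc : z * c ∈ Ideal.span {((p ^ a : ℕ) : MonoidAlgebra ℤ G)} ⊔ Δ G ^ (b + 1) :=
          S_rstab (p ^ a) (b + 1) z hz1 c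
        obtain ⟨e, he, f, hf, hef⟩ := Submodule.mem_sup.1 hzc
        rw [← hef, add_mul]
        refine add_mem ?_ ?_
        · obtain ⟨c', hc'⟩ := Submodule.mem_span_singleton.1 he
          rw [← hc', smul_eq_mul, mul_assoc]
          have hpa : ((p ^ (a + 1) : ℕ) : MonoidAlgebra ℤ G) =
              ((p ^ a : ℕ) : MonoidAlgebra ℤ G) * ((p : ℕ) : MonoidAlgebra ℤ G) := by
            rw [pow_succ, Nat.cast_mul]
          rw [← hpa]
          exact le_sup_left (α := Ideal (MonoidAlgebra ℤ G))
            (Submodule.mem_span_singleton.2 ⟨c', by rw [smul_eq_mul]⟩)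
        · exact le_sup_right (α := Ideal (MonoidAlgebra ℤ G))
            (myIdeal.pow_rstab (Δ G) Δ_rstab (b + 1) f hf _)
      · -- z * d  with  d ∈ Δ
        obtain ⟨e, he, f, hf, hef⟩ := Submodule.mem_sup.1 hz2
        rw [← hef, add_mul]
        refine add_mem (le_sup_left (α := Ideal (MonoidAlgebra ℤ G))
          (span_nat_rstab (p ^ (a + 1)) e he d)) (le_sup_right (α := Ideal (MonoidAlgebra ℤ G)) ?_)
        rw [Submodule.pow_succ]
        exact Submodule.mul_mem_mul hf hd

lemma powStep (p : ℕ) (hp : p.Prime) (y : G) :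
    ∀ j : ℕ, MonoidAlgebra.of ℤ G (y ^ p ^ j) - 1 ∈ Ip G p ^ (j + 1) := by
  intro j
  induction j with
  | zero =>
    rw [pow_zero, pow_one, Submodule.pow_one]
    exact le_sup_right (α := Ideal (MonoidAlgebra ℤ G)) (of_sub_one_mem G y)
  | succ j ih =>
    have hyp : y ^ p ^ (j + 1) = (y ^ p ^ j) ^ p := by rw [← pow_mul, pow_succ]
    rw [hyp, map_pow]
    set v := MonoidAlgebra.of ℤ G (y ^ p ^ j) with hv
    have hvJ : v - 1 ∈ Ip G p ^ (j + 1) := ih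
    have hvΔ : v - 1 ∈ Ip G p := le_sup_right (α := Ideal (MonoidAlgebra ℤ G))
      (of_sub_one_mem G (y ^ p ^ j))
    have hbin : v ^ p = ∑ i ∈ Finset.range (p + 1), (v - 1) ^ i * (p.choose i : MonoidAlgebra ℤ G) := by
      have h := (Commute.one_right (v - 1)).add_pow p
      simp only [one_pow, mul_one] at h
      have hbase : v - 1 + 1 = v := by abel
      rw [hbase] at h
      exact h
    have hsum : v ^ p - 1 =
        ∑ i ∈ Finset.range p, (v - 1) ^ (i + 1) * (p.choose (i + 1) : MonoidAlgebra ℤ G) := by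
      rw [hbin, Finset.sum_range_succ']
      simp
    rw [hsum]
    refine Submodule.sum_mem _ fun i hi => ?_
    rcases eq_or_lt_of_le (Nat.succ_le_of_lt (Finset.mem_range.1 hi)) with heq | hlt
    · -- i + 1 = p
      rw [show i + 1 = p from heq, Nat.choose_self, Nat.cast_one, mul_one]
      have h2p := hp.two_le
      obtain ⟨s, hs⟩ : ∃ s, p = s + 2 := ⟨p - 2, by omega⟩
      have h1 : (v - 1) ^ (s + 1) ∈ Ip G p ^ (j + 1) := by
        rw [pow_succ]
        exact myIdeal.mul_mem_left _ _ hvJ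
      have hps : (v - 1) ^ p = (v - 1) ^ (s + 1) * (v - 1) := by rw [hs, pow_succ]
      rw [hps, Submodule.pow_succ (n := j + 1)]
      exact Submodule.mul_mem_mul h1 hvΔ
    · -- i + 1 < p : p ∣ choose
      have hdvd : p ∣ p.choose (i + 1) := hp.dvd_choose_self (Nat.succ_ne_zero i) hlt
      obtain ⟨t, ht⟩ := hdvd
      have hw : (v - 1) ^ (i + 1) ∈ Ip G p ^ (j + 1) := by
        rw [pow_succ]
        exact myIdeal.mul_mem_left _ _ hvJ
      have hrw : (v - 1) ^ (i + 1) * (p.choose (i + 1) : MonoidAlgebra ℤ G) =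
          ((v - 1) ^ (i + 1) * (t : MonoidAlgebra ℤ G)) * ((p : ℕ) : MonoidAlgebra ℤ G) := by
        rw [ht, Nat.cast_mul, (Nat.cast_commute p ((t : ℕ) : MonoidAlgebra ℤ G)).eq, ← mul_assoc]
      rw [hrw, Submodule.pow_succ (n := j + 1)]
      exact Submodule.mul_mem_mul
        (myIdeal.pow_rstab (Ip G p) (Ip_rstab p) (j + 1) _ hw _)
        (le_sup_left (α := Ideal (MonoidAlgebra ℤ G)) (Ideal.mem_span_singleton_self _))

end Ppow

section CRT
variable {G : Type*} [Group G]

/-- If `x ∈ p^k ℤG + J` for all prime powers `p^k`, then `x ∈ m ℤG + J` for all `m ≥ 1`. -/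
lemma lemD (J : Ideal (MonoidAlgebra ℤ G)) (x : MonoidAlgebra ℤ G)
    (h : ∀ p k : ℕ, p.Prime → x ∈ Ideal.span {((p ^ k : ℕ) : MonoidAlgebra ℤ G)} ⊔ J) :
    ∀ m : ℕ, 0 < m → x ∈ Ideal.span {((m : ℕ) : MonoidAlgebra ℤ G)} ⊔ J := by
  intro m
  induction m using Nat.strong_induction_on with
  | _ m ih =>
    intro hm
    by_cases h1 : m = 1
    · subst h1
      rw [Nat.cast_one, Ideal.span_singleton_one, top_sup_eq]
      trivial
    · set p := m.minFac with hp'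
      have hp : p.Prime := Nat.minFac_prime h1
      set a := m.factorization p with ha'
      set m' := m / p ^ a with hm''
      have hmm : p ^ a * m' = m := Nat.ordProj_mul_ordCompl_eq_self m p
      have hm'pos : 0 < m' := Nat.ordCompl_pos p hm.ne'
      have hapos : 0 < a := hp.factorization_pos_of_dvd hm.ne' (Nat.minFac_dvd m)
      have hm'lt : m' < m := by
        apply Nat.div_lt_self hm
        exact Nat.one_lt_pow hapos.ne' hp.one_lt
      have hcop : Nat.Coprime (p ^ a) m' := (Nat.coprime_ordCompl hp hm.ne').pow_left a
      have hicop : IsCoprime ((p ^ a : ℕ) : ℤ) ((m' : ℕ) : ℤ) :=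
        Nat.isCoprime_iff_coprime.2 hcop
      obtain ⟨u, v, huv⟩ := hicop
      have hx1 : x ∈ Ideal.span {((p ^ a : ℕ) : MonoidAlgebra ℤ G)} ⊔ J := h p a hp
      have hx2 : x ∈ Ideal.span {((m' : ℕ) : MonoidAlgebra ℤ G)} ⊔ J := ih m' hm'lt hm'pos
      have key1 : ((p ^ a : ℕ) : MonoidAlgebra ℤ G) * x ∈
          Ideal.span {((m : ℕ) : MonoidAlgebra ℤ G)} ⊔ J := by
        obtain ⟨c, hc, d, hd, rfl⟩ := Submodule.mem_sup.1 hx2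
        rw [mul_add]
        refine add_mem ?_
          (le_sup_right (α := Ideal (MonoidAlgebra ℤ G)) (myIdeal.mul_mem_left J _ hd))
        obtain ⟨e, he⟩ := Submodule.mem_span_singleton.1 hc
        rw [← he, smul_eq_mul]
        have heq : ((p ^ a : ℕ) : MonoidAlgebra ℤ G) * (e * ((m' : ℕ) : MonoidAlgebra ℤ G)) =
            e • ((m : ℕ) : MonoidAlgebra ℤ G) := by
          rw [smul_eq_mul, ← hmm, Nat.cast_mul, ← mul_assoc,
            (Nat.cast_commute (p ^ a) e).eq, mul_assoc]
          all_goals norm_cast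
        rw [heq]
        exact le_sup_left (α := Ideal (MonoidAlgebra ℤ G))
          (Submodule.smul_mem _ _ (Ideal.mem_span_singleton_self _))
      have key2 : ((m' : ℕ) : MonoidAlgebra ℤ G) * x ∈
          Ideal.span {((m : ℕ) : MonoidAlgebra ℤ G)} ⊔ J := by
        obtain ⟨c, hc, d, hd, rfl⟩ := Submodule.mem_sup.1 hx1
        rw [mul_add]
        refine add_mem ?_
          (le_sup_right (α := Ideal (MonoidAlgebra ℤ G)) (myIdeal.mul_mem_left J _ hd))
        obtain ⟨e, he⟩ := Submodule.mem_span_singleton.1 hc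
        rw [← he, smul_eq_mul]
        have heq : ((m' : ℕ) : MonoidAlgebra ℤ G) * (e * ((p ^ a : ℕ) : MonoidAlgebra ℤ G)) =
            e • ((m : ℕ) : MonoidAlgebra ℤ G) := by
          rw [smul_eq_mul, ← hmm, Nat.cast_mul, ← mul_assoc,
            (Nat.cast_commute m' e).eq, mul_assoc, ← Nat.cast_mul, Nat.mul_comm]
          all_goals norm_cast
        rw [heq]
        exact le_sup_left (α := Ideal (MonoidAlgebra ℤ G))
          (Submodule.smul_mem _ _ (Ideal.mem_span_singleton_self _))
      have hxx : x = u • (((p ^ a : ℕ) : MonoidAlgebra ℤ G) * x) +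
          v • (((m' : ℕ) : MonoidAlgebra ℤ G) * x) := by
        calc x = (u * ((p ^ a : ℕ) : ℤ) + v * ((m' : ℕ) : ℤ)) • x := by rw [huv, one_smul]
          _ = u • (((p ^ a : ℕ) : ℤ) • x) + v • (((m' : ℕ) : ℤ) • x) := by
              rw [add_smul, mul_smul, mul_smul]
          _ = u • (((p ^ a : ℕ) : MonoidAlgebra ℤ G) * x) +
              v • (((m' : ℕ) : MonoidAlgebra ℤ G) * x) := by
              rw [natCast_zsmul, natCast_zsmul, nsmul_eq_mul, nsmul_eq_mul]
      rw [hxx]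
      exact add_mem (zsmul_mem key1 u) (zsmul_mem key2 v)

end CRT

theorem stmt17 (G : Type*) [Group G] (g g₁ : G)
    (hg : ∀ n : ℕ, MonoidAlgebra.of ℚ G g - 1 ∈ ΔQ G ^ n)
    (hg₁ : ∀ (p l k : ℕ), p.Prime →
      g₁ ∈ ((⊤ : Subgroup G).lowerCentralSeries l : Set G) *
        ((Subgroup.closure (Set.range fun y : G => y ^ p ^ k) : Subgroup G) : Set G)) :
    ∀ n : ℕ, MonoidAlgebra.of ℤ G (g₁⁻¹ * g⁻¹ * g₁ * g) - 1 ∈ Δ G ^ n := by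
  intro n
  -- Step 1: find `m ≥ 1` with `m (g - 1) ∈ Δⁿ`
  obtain ⟨m, hm, y, hyΔ, hy⟩ := lemQ n _ (hg n)
  have hy' : y = m • (MonoidAlgebra.of ℤ G g - 1) := by
    apply φ_inj
    rw [hy, map_nsmul, map_sub, map_one]
    have hofg : φ G (MonoidAlgebra.of ℤ G g) = MonoidAlgebra.of ℚ G g := by
      rw [MonoidAlgebra.of_apply, MonoidAlgebra.of_apply, φ_single, Int.cast_one]
    rw [hofg, Nat.cast_smul_eq_nsmul]
  have hgm : m • (MonoidAlgebra.of ℤ G g - 1) ∈ Δ G ^ n := hy' ▸ hyΔ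
  -- Step 2: `g₁ - 1 ∈ p^k ℤG + Δⁿ` for all prime powers
  have hstep : ∀ p k : ℕ, p.Prime → MonoidAlgebra.of ℤ G g₁ - 1 ∈
      Ideal.span {((p ^ k : ℕ) : MonoidAlgebra ℤ G)} ⊔ Δ G ^ n := by
    intro p k hp
    obtain ⟨c, hc, h, hh, hch⟩ := hg₁ p n (k + n) hp
    have hhT : MonoidAlgebra.of ℤ G h - 1 ∈
        Ideal.span {((p ^ k : ℕ) : MonoidAlgebra ℤ G)} ⊔ Δ G ^ n := by
      have hle : Subgroup.closure (Set.range fun y : G => y ^ p ^ (k + n)) ≤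
          Tsub (Ideal.span {((p ^ k : ℕ) : MonoidAlgebra ℤ G)} ⊔ Δ G ^ n) := by
        rw [Subgroup.closure_le]
        rintro _ ⟨z, rfl⟩
        rw [SetLike.mem_coe, mem_Tsub]
        have h1 := powStep p hp z (k + n)
        have h2 : Ip G p ^ (k + n + 1) ≤
            Ideal.span {((p ^ k : ℕ) : MonoidAlgebra ℤ G)} ⊔ Δ G ^ (n + 1) := by
          rw [show k + n + 1 = k + (n + 1) from rfl]
          exact Sclaim p k (n + 1)
        exact sup_le_sup_left (delta_pow_succ_le n) _ (h2 h1)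
      exact hle hh
    have hcT : MonoidAlgebra.of ℤ G c - 1 ∈ Δ G ^ n := lcs_le_Tsub n hc
    rw [← hch, map_mul]
    have hsplit : MonoidAlgebra.of ℤ G c * MonoidAlgebra.of ℤ G h - 1 =
        MonoidAlgebra.of ℤ G c * (MonoidAlgebra.of ℤ G h - 1) +
          (MonoidAlgebra.of ℤ G c - 1) := by noncomm_ring
    rw [hsplit]
    exact add_mem (myIdeal.mul_mem_left _ _ hhT)
      (le_sup_right (α := Ideal (MonoidAlgebra ℤ G)) hcT)
  -- Step 3: `g₁ - 1 ∈ m ℤG + Δⁿ`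
  have hg₁m : MonoidAlgebra.of ℤ G g₁ - 1 ∈
      Ideal.span {((m : ℕ) : MonoidAlgebra ℤ G)} ⊔ Δ G ^ n := lemD _ _ hstep m hm
  obtain ⟨z, hz, d, hd, hzd⟩ := Submodule.mem_sup.1 hg₁m
  obtain ⟨e, he⟩ := Submodule.mem_span_singleton.1 hz
  -- Step 4: both products `(g₁-1)(g-1)` and `(g-1)(g₁-1)` lie in `Δⁿ`
  set x₁ := MonoidAlgebra.of ℤ G g₁ - 1 with hx₁
  set x₂ := MonoidAlgebra.of ℤ G g - 1 with hx₂
  have t1 : x₁ * x₂ ∈ Δ G ^ n := by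
    rw [← hzd, add_mul]
    refine add_mem ?_ (myIdeal.pow_rstab (Δ G) Δ_rstab n d hd x₂)
    rw [← he, smul_eq_mul, mul_assoc]
    have : ((m : ℕ) : MonoidAlgebra ℤ G) * x₂ = m • x₂ := (nsmul_eq_mul m x₂).symm
    rw [this]
    exact myIdeal.mul_mem_left _ _ hgm
  have t2 : x₂ * x₁ ∈ Δ G ^ n := by
    rw [← hzd, mul_add]
    refine add_mem ?_ (myIdeal.mul_mem_left _ _ hd)
    rw [← he, smul_eq_mul, ← mul_assoc,
      ← (Nat.cast_commute (m : ℕ) (x₂ * e)).eq, ← nsmul_eq_mul, ← smul_mul_assoc]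
    exact myIdeal.pow_rstab (Δ G) Δ_rstab n _ hgm e
  -- Step 5: assemble the commutator
  have hfinal : MonoidAlgebra.of ℤ G (g₁⁻¹ * g⁻¹ * g₁ * g) - 1 =
      MonoidAlgebra.of ℤ G (g₁⁻¹ * g⁻¹) * (x₁ * x₂ - x₂ * x₁) := by
    have e1 : x₁ * x₂ - x₂ * x₁ =
        MonoidAlgebra.of ℤ G g₁ * MonoidAlgebra.of ℤ G g -
          MonoidAlgebra.of ℤ G g * MonoidAlgebra.of ℤ G g₁ := by
      rw [hx₁, hx₂]; noncomm_ring
    rw [e1, mul_sub, ← map_mul, ← map_mul, ← map_mul, ← map_mul]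
    rw [show g₁⁻¹ * g⁻¹ * (g₁ * g) = g₁⁻¹ * g⁻¹ * g₁ * g from by group]
    rw [show g₁⁻¹ * g⁻¹ * (g * g₁) = 1 from by group, map_one]
  rw [hfinal]
  exact myIdeal.mul_mem_left _ _ (sub_mem t1 t2)
end
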